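/- arXiv:math/9907194 — 7 statements merged into one kernel-verified Lean document; each statement's English description precedes it below -/
import Mathlib

section
/- Let n ≥ 2 be odd and let Δ = (g_1 g_2 ⋯ g_n)^{n−1} in the Artin group A(D_n). Then Δ g_1 Δ^{-1} = g_2, Δ g_2 Δ^{-1} = g_1, Δ g_i Δ^{-1} = g_i for every i with 3 ≤ i ≤ n, and Δ² is central in A(D_n). -/
/-- The braid relation word `i j i (j i j)⁻¹` in the free group. -/
def braidRel {α : Type} (i j : α) : FreeGroup α :=
  FreeGroup.of i * FreeGroup.of j * FreeGroup.of i *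
    (FreeGroup.of j * FreeGroup.of i * FreeGroup.of j)⁻¹

/-- The commutation relation word `i j (j i)⁻¹` in the free group. -/
def commRel {α : Type} (i j : α) : FreeGroup α :=
  FreeGroup.of i * FreeGroup.of j * (FreeGroup.of j * FreeGroup.of i)⁻¹

/-- Joined pairs (for `i < j`, 0-based) of the Coxeter diagram `D_n`:
`g_1—g_3`, `g_2—g_3`, and `g_i—g_{i+1}` for `3 ≤ i ≤ n-1` (1-based). -/
def DnJoined (n : ℕ) (i j : Fin n) : Prop :=
  (i.val = 0 ∧ j.val = 2) ∨ (i.val = 1 ∧ j.val = 2) ∨ (2 ≤ i.val ∧ j.val = i.val + 1)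

/-- Defining relations of the Artin group of type `D_n`: joined generators braid,
unjoined generators commute. -/
def DnRels (n : ℕ) : Set (FreeGroup (Fin n)) :=
  { r | ∃ i j : Fin n, i < j ∧
      ((DnJoined n i j ∧ r = braidRel i j) ∨ (¬ DnJoined n i j ∧ r = commRel i j)) }

/-- The Artin group `A(D_n)`, with generators `g_1, …, g_n` indexed by `Fin n` (0-based). -/
abbrev ArtinD (n : ℕ) : Type := PresentedGroup (DnRels n)

/-- The standard generator `g_{i+1}` of `A(D_n)`. -/
def gD (n : ℕ) (i : Fin n) : ArtinD n := PresentedGroup.of i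

/-- The fundamental element `Δ = (g_1 g_2 ⋯ g_n)^{n-1}` of `A(D_n)`. -/
def DeltaD (n : ℕ) : ArtinD n := ((List.ofFn (gD n)).prod) ^ (n - 1)

namespace AD

/-! ### generic group helpers -/

section helpers
variable {G : Type*} [Group G]

/-- conjugation -/
def cj (a x : G) : G := a * x * a⁻¹

lemma cj_mul (a x y : G) : cj a (x * y) = cj a x * cj a y := by unfold cj; group

lemma cj_inv (a x : G) : cj a x⁻¹ = (cj a x)⁻¹ := by unfold cj; group

lemma cj_cj (a b x : G) : cj a (cj b x) = cj (a * b) x := by unfold cj; group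

lemma cj_eq_of {a x y : G} (h : a * x = y * a) : cj a x = y := by
  unfold cj; rw [h]; group

lemma cj_eq_iff {a x y : G} : cj a x = y ↔ a * x = y * a := by
  constructor
  · intro h; rw [← h]; unfold cj; group
  · exact cj_eq_of

lemma swapL {a b : G} (h : a * b = b * a) (c : G) : a * (b * c) = b * (a * c) := by
  rw [← mul_assoc, h, mul_assoc]

lemma braidL {a b : G} (h : a * b * a = b * a * b) (c : G) :
    a * (b * (a * c)) = b * (a * (b * c)) := by
  rw [← mul_assoc, ← mul_assoc, h, mul_assoc, mul_assoc]

end helpers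

variable {n : ℕ}

/-! ### generators indexed by ℕ -/

def gg (n : ℕ) (k : ℕ) : ArtinD n := if h : k < n then gD n ⟨k, h⟩ else 1

lemma gg_eq (k : ℕ) (h : k < n) : gg n k = gD n ⟨k, h⟩ := dif_pos h

lemma gg_big (k : ℕ) (h : ¬ k < n) : gg n k = 1 := dif_neg h

lemma mk_rel {r : FreeGroup (Fin n)} (hr : r ∈ DnRels n) :
    PresentedGroup.mk (DnRels n) r = 1 :=
  (QuotientGroup.eq_one_iff r).mpr (Subgroup.subset_normalClosure hr)

lemma braid_fin {i j : Fin n} (hij : i < j) (h : DnJoined n i j) :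
    gD n i * gD n j * gD n i = gD n j * gD n i * gD n j := by
  have h1 := mk_rel (n := n) (r := braidRel i j) ⟨i, j, hij, Or.inl ⟨h, rfl⟩⟩
  rw [braidRel] at h1
  simp only [map_mul, map_inv] at h1
  rw [mul_inv_eq_one] at h1
  exact h1

lemma comm_fin {i j : Fin n} (hij : i < j) (h : ¬ DnJoined n i j) :
    gD n i * gD n j = gD n j * gD n i := by
  have h1 := mk_rel (n := n) (r := commRel i j) ⟨i, j, hij, Or.inr ⟨h, rfl⟩⟩
  rw [commRel] at h1
  simp only [map_mul, map_inv] at h1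
  rw [mul_inv_eq_one] at h1
  exact h1

lemma ggbraid {i j : ℕ} (hj : j < n)
    (h : (i = 0 ∧ j = 2) ∨ (i = 1 ∧ j = 2) ∨ (2 ≤ i ∧ j = i + 1)) :
    gg n i * gg n j * gg n i = gg n j * gg n i * gg n j := by
  have hi : i < n := by omega
  rw [gg_eq i hi, gg_eq j hj]
  exact braid_fin (by simp only [Fin.lt_def]; omega) (by unfold DnJoined; simp only; omega)

lemma ggcomm' {i j : ℕ}
    (h : ¬((i = 0 ∧ j = 2) ∨ (i = 1 ∧ j = 2) ∨ (2 ≤ i ∧ j = i + 1) ∨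
          (j = 0 ∧ i = 2) ∨ (j = 1 ∧ i = 2) ∨ (2 ≤ j ∧ i = j + 1)))
    (hne : i ≠ j) : Commute (gg n i) (gg n j) := by
  rcases lt_or_gt_of_ne hne with hij | hij
  · by_cases hjn : j < n
    · have hi : i < n := by omega
      rw [gg_eq i hi, gg_eq j hjn]
      exact comm_fin (by simp only [Fin.lt_def]; omega) (by unfold DnJoined; simp only; omega)
    · rw [gg_big j hjn]; exact Commute.one_right _
  · by_cases hin : i < n
    · have hjn : j < n := by omega
      rw [gg_eq i hin, gg_eq j hjn]
      exact (comm_fin (i := ⟨j, hjn⟩) (j := ⟨i, hin⟩) (by simp only [Fin.lt_def]; omega)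
        (by unfold DnJoined; simp only; omega)).symm
    · rw [gg_big i hin]; exact Commute.one_left _


/-! ### segments -/

def seg (n a b : ℕ) : ArtinD n := ((List.range' a (b + 1 - a)).map (gg n)).prod

lemma seg_empty {a b : ℕ} (h : b + 1 ≤ a) : seg n a b = 1 := by
  unfold seg
  rw [Nat.sub_eq_zero_of_le h]
  simp

lemma seg_succ {a b : ℕ} (h : a ≤ b + 1) : seg n a (b + 1) = seg n a b * gg n (b + 1) := by
  unfold seg
  rw [show b + 1 + 1 - a = (b + 1 - a) + 1 by omega, List.range'_concat,
    List.map_append, List.prod_append, show a + 1 * (b + 1 - a) = b + 1 by omega]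
  simp

lemma seg_cons {a b : ℕ} (h : a ≤ b) : seg n a b = gg n a * seg n (a + 1) b := by
  unfold seg
  rw [show b + 1 - a = (b - a) + 1 by omega, List.range'_succ, List.map_cons, List.prod_cons,
    show b + 1 - (a + 1) = b - a by omega]

lemma seg_single (a : ℕ) : seg n a a = gg n a := by
  rw [seg_cons le_rfl, seg_empty (by omega), mul_one]

lemma comm_seg {k a b : ℕ} (h : ∀ j, a ≤ j → j ≤ b → Commute (gg n k) (gg n j)) :
    Commute (gg n k) (seg n a b) := by
  unfold seg
  apply Commute.list_prod_right
  intro x hx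
  simp only [List.mem_map] at hx
  obtain ⟨j, hj, rfl⟩ := hx
  rw [List.mem_range'] at hj
  obtain ⟨i, hi, rfl⟩ := hj
  exact h _ (by omega) (by omega)

/-- `g_k` for `k ∈ {0,1}` commutes with a segment of indices `≥ 3`. -/
lemma comm_low_seg {k a b : ℕ} (hk : k ≤ 1) (ha : 3 ≤ a) : Commute (gg n k) (seg n a b) :=
  comm_seg (fun j hj1 _ => ggcomm' (by omega) (by omega))

/-- `g_k` commutes with a segment of indices `≤ k - 2` (when `2 ≤ a`). -/
lemma comm_high_seg {k a b : ℕ} (ha : 2 ≤ a) (hb : b + 2 ≤ k) : Commute (gg n k) (seg n a b) :=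
  comm_seg (fun j hj1 hj2 => ggcomm' (by omega) (by omega))

/-- shifting a chain generator through a chain segment. -/
lemma seg_shift {a b i : ℕ} (ha : 2 ≤ a) (hai : a ≤ i) (hib : i < b) (hbn : b < n) :
    seg n a b * gg n i = gg n (i + 1) * seg n a b := by
  obtain ⟨m, rfl⟩ : ∃ m, b = i + 1 + m := ⟨b - (i + 1), by omega⟩
  clear hib
  induction m with
  | zero =>
    obtain ⟨i', rfl⟩ : ∃ i', i = i' + 1 := ⟨i - 1, by omega⟩
    rw [show i' + 1 + 1 + 0 = (i' + 1) + 1 by omega] at *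
    rw [seg_succ (by omega), seg_succ (show a ≤ i' + 1 by omega)]
    have hb := ggbraid (n := n) (i := i' + 1) (j := i' + 2) (by omega) (by omega)
    have hc : Commute (gg n (i' + 2)) (seg n a i') := comm_high_seg ha (by omega)
    calc seg n a i' * gg n (i' + 1) * gg n (i' + 1 + 1) * gg n (i' + 1)
        = seg n a i' * (gg n (i' + 1) * gg n (i' + 2) * gg n (i' + 1)) := by
          rw [show i' + 1 + 1 = i' + 2 from rfl]; group
      _ = seg n a i' * (gg n (i' + 2) * gg n (i' + 1) * gg n (i' + 2)) := by rw [hb]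
      _ = gg n (i' + 2) * seg n a i' * gg n (i' + 1) * gg n (i' + 2) := by
          rw [← mul_assoc, ← mul_assoc, ← hc.eq]
      _ = gg n (i' + 1 + 1) * (seg n a i' * gg n (i' + 1) * gg n (i' + 1 + 1)) := by
          rw [show i' + 1 + 1 = i' + 2 from rfl]; group
  | succ m ih =>
    rw [show i + 1 + (m + 1) = (i + 1 + m) + 1 by omega] at *
    rw [seg_succ (by omega)]
    have hc : Commute (gg n i) (gg n (i + 1 + m + 1)) :=
      (ggcomm' (by omega) (by omega)).symm
    calc seg n a (i + 1 + m) * gg n (i + 1 + m + 1) * gg n i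
        = seg n a (i + 1 + m) * gg n i * gg n (i + 1 + m + 1) := by
          rw [mul_assoc, ← hc.eq, mul_assoc]
      _ = gg n (i + 1) * (seg n a (i + 1 + m) * gg n (i + 1 + m + 1)) := by
          rw [mul_assoc, ← mul_assoc, ih (by omega)]; group

/-! ### the Coxeter element -/

def cD (n : ℕ) : ArtinD n := seg n 0 (n - 1)

lemma cj_one {G : Type*} [Group G] (a : G) : cj a 1 = 1 := by unfold cj; group

lemma c_decomp (hn : 3 ≤ n) : cD n = gg n 0 * (gg n 1 * seg n 2 (n - 1)) := by
  unfold cD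
  rw [seg_cons (show 0 ≤ n - 1 by omega), seg_cons (show 0 + 1 ≤ n - 1 by omega)]

lemma c_shift (hn : 3 ≤ n) {i : ℕ} (h2 : 2 ≤ i) (hi : i + 2 ≤ n) :
    cD n * gg n i = gg n (i + 1) * cD n := by
  have hs : seg n 2 (n - 1) * gg n i = gg n (i + 1) * seg n 2 (n - 1) :=
    seg_shift le_rfl h2 (by omega) (by omega)
  have h1 : gg n 1 * gg n (i + 1) = gg n (i + 1) * gg n 1 :=
    (ggcomm' (by omega) (by omega)).eq
  have h0 : gg n 0 * gg n (i + 1) = gg n (i + 1) * gg n 0 :=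
    (ggcomm' (by omega) (by omega)).eq
  rw [c_decomp hn]
  simp only [mul_assoc]
  rw [hs, swapL h1, swapL h0]

lemma c_shift_cj (hn : 3 ≤ n) {i : ℕ} (h2 : 2 ≤ i) (hi : i + 2 ≤ n) :
    cj (cD n) (gg n i) = gg n (i + 1) :=
  cj_eq_of (c_shift hn h2 hi)

lemma c_g0 (hn : 3 ≤ n) : cj (cD n) (gg n 0) = cj (gg n 1) (gg n 2) := by
  rw [cj_eq_iff]
  have hseg : seg n 2 (n - 1) = gg n 2 * seg n 3 (n - 1) := by
    rw [seg_cons (show 2 ≤ n - 1 by omega)]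
  have h0s : Commute (gg n 0) (seg n 3 (n - 1)) := comm_low_seg (by omega) (by omega)
  have h01 : gg n 0 * gg n 1 = gg n 1 * gg n 0 := (ggcomm' (by omega) (by omega)).eq
  have h01' : (gg n 1)⁻¹ * gg n 0 = gg n 0 * (gg n 1)⁻¹ :=
    ((ggcomm' (n := n) (i := 0) (j := 1) (by omega) (by omega)).symm.inv_left).eq
  have hb : gg n 0 * gg n 2 * gg n 0 = gg n 2 * gg n 0 * gg n 2 :=
    ggbraid (by omega) (by omega)
  rw [c_decomp hn, hseg, cj]
  simp only [mul_assoc]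
  rw [h0s.symm.eq, swapL h01', inv_mul_cancel_left, swapL h01, braidL hb]

lemma c_g1 (hn : 3 ≤ n) : cj (cD n) (gg n 1) = cj (gg n 0) (gg n 2) := by
  rw [cj_eq_iff]
  have hseg : seg n 2 (n - 1) = gg n 2 * seg n 3 (n - 1) := by
    rw [seg_cons (show 2 ≤ n - 1 by omega)]
  have h1s : Commute (gg n 1) (seg n 3 (n - 1)) := comm_low_seg (by omega) (by omega)
  have h01' : (gg n 0)⁻¹ * gg n 0 = 1 := by group
  have hb : gg n 1 * gg n 2 * gg n 1 = gg n 2 * gg n 1 * gg n 2 :=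
    ggbraid (by omega) (by omega)
  rw [c_decomp hn, hseg, cj]
  simp only [mul_assoc]
  rw [h1s.symm.eq, inv_mul_cancel_left, braidL hb]

lemma cj_c_seg (hn : 3 ≤ n) {k : ℕ} (hk : k ≤ n - 2) :
    cj (cD n) (seg n 2 k) = seg n 3 (k + 1) := by
  induction k with
  | zero => rw [seg_empty (by omega), seg_empty (by omega), cj_one]
  | succ k ih =>
    rcases Nat.lt_or_ge (k + 1) 2 with h | h
    · rw [seg_empty (by omega), seg_empty (by omega), cj_one]
    · rw [seg_succ (show 2 ≤ k + 1 by omega), cj_mul, ih (by omega),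
        c_shift_cj hn (by omega) (by omega), seg_succ (show 3 ≤ k + 1 + 1 by omega)]

lemma cj_self {G : Type*} [Group G] (a : G) : cj a a = a := by unfold cj; group

lemma cj_id {G : Type*} [Group G] (x : G) : cj 1 x = x := by unfold cj; group

lemma cj_hom {G : Type*} [Group G] (a b x : G) : cj a (cj b x) = cj (cj a b) (cj a x) := by
  unfold cj; group

lemma cj_of_commute {G : Type*} [Group G] {a x : G} (h : Commute a x) : cj a x = x := by
  unfold cj; rw [h.eq]; group

lemma cj_c_low (hn : 3 ≤ n) {t : ℕ} (ht : t ≤ 1) :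
    cj (cD n) (gg n t) = cj (gg n (1 - t)) (gg n 2) := by
  interval_cases t
  · exact c_g0 hn
  · exact c_g1 hn

/-- the key orbit lemma: the conjugate of `g_t`, `t ∈ {0,1}`, under `c^k`. -/
lemma Xk (hn : 3 ≤ n) {t : ℕ} (ht : t ≤ 1) :
    ∀ k, 1 ≤ k → k ≤ n - 2 →
      cj (cD n ^ k) (gg n t) = cj (gg n ((t + k) % 2) * seg n 2 k) (gg n (k + 1)) := by
  intro k hk
  induction k, hk using Nat.le_induction with
  | base =>
    intro hk2
    rw [pow_one, cj_c_low hn ht, seg_empty (by omega), mul_one,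
      show (t + 1) % 2 = 1 - t by omega]
  | succ k hk ih =>
    intro hk2
    have hmod : (t + k) % 2 ≤ 1 := by omega
    rw [pow_succ', ← cj_cj, ih (by omega), cj_hom, cj_mul,
      cj_c_low hn hmod, cj_c_seg hn (show k ≤ n - 2 by omega),
      c_shift_cj hn (by omega) (by omega)]
    have hc : Commute ((gg n (1 - (t + k) % 2))⁻¹) (seg n 3 (k + 1)) :=
      (comm_low_seg (by omega) (by omega)).inv_left
    have hc2 : Commute ((gg n (1 - (t + k) % 2))⁻¹) (gg n (k + 1 + 1)) :=
      (ggcomm' (by omega) (by omega)).inv_left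
    rw [show cj (gg n (1 - (t + k) % 2)) (gg n 2) * seg n 3 (k + 1)
        = gg n (1 - (t + k) % 2) * gg n 2 * (seg n 3 (k + 1)) * (gg n (1 - (t + k) % 2))⁻¹ from by
          unfold cj; rw [mul_assoc _ _ (seg n 3 (k+1)), hc.eq]; group]
    rw [← cj_cj, cj_of_commute hc2,
      show gg n (1 - (t + k) % 2) * gg n 2 * seg n 3 (k + 1)
         = gg n ((t + (k + 1)) % 2) * seg n 2 (k + 1) from by
        rw [seg_cons (show 2 ≤ k + 1 by omega), show (t + (k+1)) % 2 = 1 - (t+k) % 2 by omega,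
          mul_assoc]]

/-- key lemma K: `(g_2 ⋯ g_{m+2}) u (g_2 ⋯ g_{m+1}) g_{m+2} = u (g_2 ⋯ g_{m+2}) u (g_2 ⋯ g_{m+1})`
    for `u ∈ {g_0, g_1}`. -/
lemma Klem {u : ℕ} (hu : u ≤ 1) :
    ∀ m, m + 2 < n →
      seg n 2 (m + 2) * (gg n u * (seg n 2 (m + 1) * gg n (m + 2)))
        = gg n u * (seg n 2 (m + 2) * (gg n u * seg n 2 (m + 1))) := by
  intro m
  induction m with
  | zero =>
    intro hm
    rw [seg_single, seg_empty (by omega), one_mul, mul_one]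
    have hb := ggbraid (n := n) (i := u) (j := 2) (by omega) (by omega)
    simp only [← mul_assoc]
    exact hb.symm
  | succ m ih =>
    intro hm
    have e3 : seg n 2 (m + 1 + 2) = seg n 2 (m + 2) * gg n (m + 3) := by
      rw [show m + 1 + 2 = (m + 2) + 1 by omega, seg_succ (by omega),
        show m + 2 + 1 = m + 3 by omega]
    have e2 : seg n 2 (m + 1 + 1) = seg n 2 (m + 1) * gg n (m + 2) := by
      rw [seg_succ (by omega)]
    have hcu : Commute (gg n (m + 3)) (gg n u) := (ggcomm' (by omega) (by omega)).symm
    have hcs : Commute (gg n (m + 3)) (seg n 2 (m + 1)) := comm_high_seg (by omega) (by omega)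
    have hb : gg n (m + 3) * (gg n (m + 2) * gg n (m + 3))
        = gg n (m + 2) * (gg n (m + 3) * gg n (m + 2)) := by
      have := ggbraid (n := n) (i := m + 2) (j := m + 3) (by omega) (by omega)
      simp only [← mul_assoc]
      exact this.symm
    rw [e2, e3]
    simp only [mul_assoc]
    rw [swapL hcu.eq, swapL hcs.eq, hb]
    -- now: seg n 2 (m+2) * (gg u * (seg 2 (m+1) * (gg (m+2) * (gg (m+3) * gg (m+2)))))
    simp only [← mul_assoc]
    rw [show seg n 2 (m+2) * gg n u * seg n 2 (m+1) * gg n (m+2) * gg n (m+3) * gg n (m+2)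
        = (seg n 2 (m+2) * (gg n u * (seg n 2 (m+1) * gg n (m+2)))) * gg n (m+3) * gg n (m+2) from by
          simp only [mul_assoc]]
    rw [ih (by omega)]
    simp only [mul_assoc]
    rw [swapL hcu.eq, swapL hcs.eq]

/-- key lemma E: `(g_3 ⋯ g_{m+2})(g_2 ⋯ g_{m+1}) g_{m+2} = g_2 (g_3 ⋯ g_{m+2})(g_2 ⋯ g_{m+1})`. -/
lemma Elem : ∀ m, m + 2 < n →
    seg n 3 (m + 2) * (seg n 2 (m + 1) * gg n (m + 2))
      = gg n 2 * (seg n 3 (m + 2) * seg n 2 (m + 1)) := by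
  intro m
  induction m with
  | zero =>
    intro hm
    rw [seg_empty (show (2:ℕ) + 1 ≤ 3 by omega), seg_empty (show (1:ℕ) + 1 ≤ 2 by omega)]
    simp
  | succ m ih =>
    intro hm
    have e3 : seg n 3 (m + 1 + 2) = seg n 3 (m + 2) * gg n (m + 3) := by
      rw [show m + 1 + 2 = (m + 2) + 1 by omega, seg_succ (by omega),
        show m + 2 + 1 = m + 3 by omega]
    have e2 : seg n 2 (m + 1 + 1) = seg n 2 (m + 1) * gg n (m + 2) := by
      rw [seg_succ (by omega)]
    have hcs : Commute (gg n (m + 3)) (seg n 2 (m + 1)) := comm_high_seg (by omega) (by omega)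
    have hb : gg n (m + 3) * (gg n (m + 2) * gg n (m + 3))
        = gg n (m + 2) * (gg n (m + 3) * gg n (m + 2)) := by
      have := ggbraid (n := n) (i := m + 2) (j := m + 3) (by omega) (by omega)
      simp only [← mul_assoc]
      exact this.symm
    rw [e2, e3]
    simp only [mul_assoc]
    rw [swapL hcs.eq, hb]
    simp only [← mul_assoc]
    rw [show seg n 3 (m+2) * seg n 2 (m+1) * gg n (m+2) * gg n (m+3) * gg n (m+2)
        = (seg n 3 (m+2) * (seg n 2 (m+1) * gg n (m+2))) * gg n (m+3) * gg n (m+2) from by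
          simp only [mul_assoc]]
    rw [ih (by omega)]
    simp only [mul_assoc]
    rw [swapL hcs.eq]

lemma c_gn_aux (m : ℕ) (hn : n = m + 3) :
    cD n = (gg n 0 * (gg n 1 * seg n 2 (m + 1))) * gg n (m + 2) := by
  subst hn
  rw [c_decomp (by omega), show m + 3 - 1 = (m + 1) + 1 by omega,
    seg_succ (show 2 ≤ m + 1 + 1 by omega)]
  simp only [mul_assoc]

lemma c_gn (m : ℕ) (hn : n = m + 3) :
    cj (cD n) (gg n (m + 2)) = cj (gg n 0 * (gg n 1 * seg n 2 (m + 1))) (gg n (m + 2)) := by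
  rw [c_gn_aux m hn, ← cj_cj, cj_self]

lemma cj_c_p (m : ℕ) (hn : n = m + 3) :
    cj (cD n) (gg n 0 * (gg n 1 * seg n 2 (m + 1)))
      = cj (gg n 1) (gg n 2) * (cj (gg n 0) (gg n 2) * seg n 3 (m + 2)) := by
  have h1 : cj (cD n) (seg n 2 (m + 1)) = seg n 3 (m + 2) := by
    rw [cj_c_seg (by omega) (show m + 1 ≤ n - 2 by omega)]
  rw [cj_mul, cj_mul, c_g0 (by omega), c_g1 (by omega), h1]

lemma c2gn (m : ℕ) (hn : n = m + 3) : cj (cD n ^ 2) (gg n (m + 2)) = gg n 2 := by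
  have hgn := c_gn m hn
  have key : (cj (cD n) (gg n 0 * (gg n 1 * seg n 2 (m + 1))) *
      (gg n 0 * (gg n 1 * seg n 2 (m + 1)))) * gg n (m + 2)
      = gg n 2 * (cj (cD n) (gg n 0 * (gg n 1 * seg n 2 (m + 1))) *
      (gg n 0 * (gg n 1 * seg n 2 (m + 1)))) := by
    rw [cj_c_p m hn]
    have hc0s : (gg n 0)⁻¹ * seg n 3 (m + 2) = seg n 3 (m + 2) * (gg n 0)⁻¹ :=
      ((comm_low_seg (show (0:ℕ) ≤ 1 by omega) (le_refl 3)).inv_left).eq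
    have hc1s : seg n 3 (m + 2) * gg n 1 = gg n 1 * seg n 3 (m + 2) :=
      (comm_low_seg (show (1:ℕ) ≤ 1 by omega) (le_refl 3)).symm.eq
    have h12 : gg n 1 * gg n 2 * gg n 1 = gg n 2 * gg n 1 * gg n 2 :=
      ggbraid (by omega) (by omega)
    have h01 : gg n 0 * gg n 1 = gg n 1 * gg n 0 := (ggcomm' (by omega) (by omega)).eq
    unfold cj
    simp only [mul_assoc]
    rw [swapL hc0s, inv_mul_cancel_left, swapL hc1s, Elem m (by omega)]
    rw [← braidL h12, swapL h01, inv_mul_cancel_left]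
    rw [swapL hc0s, inv_mul_cancel_left, swapL hc1s]
    rw [← braidL h12, mul_inv_cancel_left]
  calc cj (cD n ^ 2) (gg n (m + 2))
      = cj (cD n) (cj (cD n) (gg n (m + 2))) := by rw [pow_two, ← cj_cj]
    _ = cj (cD n) (cj (gg n 0 * (gg n 1 * seg n 2 (m + 1))) (gg n (m + 2))) := by rw [hgn]
    _ = cj (cj (cD n) (gg n 0 * (gg n 1 * seg n 2 (m + 1))))
          (cj (cD n) (gg n (m + 2))) := cj_hom _ _ _
    _ = cj (cj (cD n) (gg n 0 * (gg n 1 * seg n 2 (m + 1))))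
          (cj (gg n 0 * (gg n 1 * seg n 2 (m + 1))) (gg n (m + 2))) := congrArg _ hgn
    _ = cj (cj (cD n) (gg n 0 * (gg n 1 * seg n 2 (m + 1))) *
          (gg n 0 * (gg n 1 * seg n 2 (m + 1)))) (gg n (m + 2)) := by rw [cj_cj]
    _ = gg n 2 := cj_eq_of key

lemma cj_pow_shift (hn : 3 ≤ n) : ∀ j {i}, 2 ≤ i → i + j ≤ n - 1 →
    cj (cD n ^ j) (gg n i) = gg n (i + j) := by
  intro j
  induction j with
  | zero => intro i h2 hi; rw [pow_zero, cj_id, Nat.add_zero]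
  | succ j ih =>
    intro i h2 hi
    rw [pow_succ', ← cj_cj, ih h2 (by omega), c_shift_cj hn (by omega) (by omega),
      show i + j + 1 = i + (j + 1) by omega]

/-- `Δ` fixes the chain generators `g_i`, `2 ≤ i ≤ n-1`. -/
lemma delta_fix (hn : 3 ≤ n) {i : ℕ} (h2 : 2 ≤ i) (hi : i ≤ n - 1) :
    cj (cD n ^ (n - 1)) (gg n i) = gg n i := by
  obtain ⟨m, hm⟩ : ∃ m, n = m + 3 := ⟨n - 3, by omega⟩
  have hsplit : cD n ^ (n - 1) = cD n ^ (i - 2) * (cD n ^ 2 * cD n ^ (n - 1 - i)) := by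
    rw [← pow_add, ← pow_add]
    congr 1
    omega
  rw [hsplit, ← cj_cj, ← cj_cj,
    cj_pow_shift hn _ h2 (by omega),
    show i + (n - 1 - i) = m + 2 by omega,
    c2gn m hm,
    cj_pow_shift hn _ (le_refl 2) (by omega),
    show 2 + (i - 2) = i by omega]

/-- `Δ` swaps `g_0` and `g_1` (for odd `n`). -/
lemma delta_swap (hn : 3 ≤ n) (hodd : n % 2 = 1) {t : ℕ} (ht : t ≤ 1) :
    cj (cD n ^ (n - 1)) (gg n t) = gg n (1 - t) := by
  obtain ⟨m, hm⟩ : ∃ m, n = m + 3 := ⟨n - 3, by omega⟩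
  have h1 : cD n ^ (n - 1) = cD n * cD n ^ (m + 1) := by
    rw [← pow_succ']
    congr 1
    omega
  have hX := Xk (n := n) hn ht (m + 1) (by omega) (by omega)
  rw [h1, ← cj_cj, hX, show (t + (m + 1)) % 2 = 1 - t by omega, cj_hom, cj_mul,
    cj_c_low hn (show 1 - t ≤ 1 by omega), show 1 - (1 - t) = t by omega,
    cj_c_seg hn (show m + 1 ≤ n - 2 by omega), show m + 1 + 1 = m + 2 by omega,
    c_gn m hm, cj_cj]
  -- now : cj (cj (gg t) (gg 2) * seg 3 (m+2) * (gg 0 * (gg 1 * seg 2 (m+1)))) (gg (m+2)) = gg (1-t)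
  apply cj_eq_of
  have hcts : (gg n t)⁻¹ * seg n 3 (m + 2) = seg n 3 (m + 2) * (gg n t)⁻¹ :=
    ((comm_low_seg ht (le_refl 3)).inv_left).eq
  have hK := Klem (n := n) (u := 1 - t) (by omega) m (by omega)
  have hseg : seg n 2 (m + 2) = gg n 2 * seg n 3 (m + 2) :=
    seg_cons (by omega)
  have hcancel : (gg n t)⁻¹ * (gg n 0 * (gg n 1 * seg n 2 (m + 1)))
      = gg n (1 - t) * seg n 2 (m + 1) := by
    interval_cases t
    · rw [inv_mul_cancel_left]
    · rw [swapL ((ggcomm' (n := n) (i := 0) (j := 1) (by omega) (by omega)).symm.inv_left).eq,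
        inv_mul_cancel_left]
  have hcz : ∀ z : ArtinD n, (gg n t)⁻¹ * (gg n 0 * (gg n 1 * (seg n 2 (m + 1) * z)))
      = gg n (1 - t) * (seg n 2 (m + 1) * z) := by
    intro z
    interval_cases t
    · rw [inv_mul_cancel_left]
    · rw [swapL ((ggcomm' (n := n) (i := 0) (j := 1) (by omega) (by omega)).symm.inv_left).eq,
        inv_mul_cancel_left]
  have hc01 : gg n t * gg n (1 - t) = gg n (1 - t) * gg n t := by
    interval_cases t
    · exact (ggcomm' (by omega) (by omega)).eq
    · exact (ggcomm' (by omega) (by omega)).symm.eq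
  unfold cj
  simp only [mul_assoc]
  rw [swapL hcts]
  rw [hcz (gg n (m + 2))]
  rw [swapL hcts]
  rw [hcancel]
  rw [← mul_assoc (gg n 2) (seg n 3 (m + 2)) (gg n (1 - t) * (seg n 2 (m + 1) * gg n (m + 2))),
    ← mul_assoc (gg n 2) (seg n 3 (m + 2)) (gg n (1 - t) * seg n 2 (m + 1)),
    ← hseg, hK, swapL hc01]

lemma ofFn_eq (hn : 1 ≤ n) : (List.ofFn (gD n)).prod = cD n := by
  unfold cD seg
  rw [show n - 1 + 1 - 0 = n by omega]
  congr 1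
  rw [show List.range' 0 n = List.range n from (List.range_eq_range' (n := n)).symm]
  apply List.ext_getElem
  · simp
  · intro i h1 h2
    simp only [List.getElem_ofFn, List.getElem_map, List.getElem_range]
    rw [gg_eq i (by simpa using h2)]

lemma DeltaD_eq (hn : 1 ≤ n) : DeltaD n = cD n ^ (n - 1) := by
  unfold DeltaD; rw [ofFn_eq hn]

end AD


open AD

/-- For odd `n ≥ 2`, conjugation by `Δ = (g_1 ⋯ g_n)^{n-1}` swaps `g_1` and `g_2`,
fixes `g_3, …, g_n`, and `Δ²` is central in `A(D_n)`. -/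
theorem statement0 (n : ℕ) (hn : 2 ≤ n) (hodd : Odd n) :
    DeltaD n * gD n ⟨0, by omega⟩ * (DeltaD n)⁻¹ = gD n ⟨1, by omega⟩ ∧
    DeltaD n * gD n ⟨1, by omega⟩ * (DeltaD n)⁻¹ = gD n ⟨0, by omega⟩ ∧
    (∀ i : Fin n, 2 ≤ i.val → DeltaD n * gD n i * (DeltaD n)⁻¹ = gD n i) ∧
    (DeltaD n) ^ 2 ∈ Subgroup.center (ArtinD n) := by
  have hn3 : 3 ≤ n := by
    obtain ⟨k, hk⟩ := hodd; omega
  have hodd' : n % 2 = 1 := Nat.odd_iff.mp hodd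
  have hΔ : DeltaD n = cD n ^ (n - 1) := DeltaD_eq (by omega)
  have hz : ∀ j : Fin n, cj (DeltaD n ^ 2) (gD n j) = gD n j := by
    intro j
    have e : gD n j = gg n j.val := (gg_eq j.val j.isLt).symm
    have h2 : DeltaD n ^ 2 = cD n ^ (n - 1) * cD n ^ (n - 1) := by rw [hΔ, pow_two]
    rw [h2, ← cj_cj, e]
    rcases Nat.lt_or_ge j.val 2 with hlt | hge
    · rw [delta_swap hn3 hodd' (show j.val ≤ 1 by omega),
        delta_swap hn3 hodd' (show 1 - j.val ≤ 1 by omega),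
        show 1 - (1 - j.val) = j.val by omega]
    · rw [delta_fix hn3 hge (by omega), delta_fix hn3 hge (by omega)]
  refine ⟨?_, ?_, ?_, ?_⟩
  · have h := delta_swap (n := n) hn3 hodd' (t := 0) (by omega)
    rw [gg_eq 0 (by omega), gg_eq 1 (by omega)] at h
    rw [hΔ]
    exact h
  · have h := delta_swap (n := n) hn3 hodd' (t := 1) (by omega)
    rw [gg_eq 1 (by omega), gg_eq 0 (by omega)] at h
    rw [hΔ]
    exact h
  · intro i hi
    have h := delta_fix (n := n) hn3 hi (by omega)
    rw [gg_eq i.val i.isLt] at h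
    rw [hΔ]
    exact h
  · apply Subgroup.mem_center_iff.mpr
    intro g
    have hg : g ∈ Subgroup.centralizer {DeltaD n ^ 2} := by
      apply PresentedGroup.generated_by
      intro j
      exact Subgroup.mem_centralizer_singleton_iff.mpr (cj_eq_iff.mp (hz j)).symm
    exact Subgroup.mem_centralizer_singleton_iff.mp hg
end

section
/- Let n ≥ 2 be even and let Δ = (g_1 g_2 ⋯ g_n)^{n−1} in the Artin group A(D_n). Then Δ is central in A(D_n); in particular Δ g_i Δ^{-1} = g_i for every i with 1 ≤ i ≤ n. -/
/-!
Let `δ = g_1 g_2 ⋯ g_n` be the Coxeter element, so that `Δ = δ^{n-1}`. Conjugation by `δ`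
shifts `g_k` to `g_{k+1}` for `3 ≤ k < n`, and `δ² g_n δ⁻² = g_3`; hence `Δ = δ² δ^{n-3}` fixes
`g_3`, and with it every `g_k = δ^{k-3} g_3 δ^{3-k}`, `k ≥ 3`.

For the two fork generators, `u = g_3 δ` interchanges `g_1` and `g_2` under conjugation: this is
a braid computation in `⟨g_1, g_2, g_3⟩`, the rest of `δ` commuting with `g_1` and `g_2`. Writing
`g_3 ⋯ g_n` as a product of conjugates of `g_3` by powers of `δ` and telescoping gives
`Δ = g_1 g_2 u^{n-2}`. When `n` is even, `u^{n-2}` is an even power of `u` and fixes `g_1` and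
`g_2`, and so does `g_1 g_2`.
-/

section BraidWords

variable {G : Type*} [Group G] {a b c : G}

lemma semiconjBy_braid_fork (hab : Commute a b) (hac : a * c * a = c * a * c)
    (hbc : b * c * b = c * b * c) : SemiconjBy (c * (a * b * c)) a b :=
  calc c * (a * b * c) * a = c * (b * a) * c * a := by rw [← hab.eq]; group
    _ = c * b * (c * a * c) := by rw [← hac]; group
    _ = b * c * b * a * c := by rw [hbc]; group
    _ = b * (c * (a * b * c)) := by rw [hab.eq]; group

lemma braid_fork_sq (hab : Commute a b) (hac : a * c * a = c * a * c)
    (hbc : b * c * b = c * b * c) : (a * b * c) ^ 2 = c * (a * b * c) * (a * b) :=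
  calc (a * b * c) ^ 2 = b * a * c * a * b * c := by rw [← hab.eq, sq]; group
    _ = b * (c * a * c) * b * c := by rw [← hac]; group
    _ = b * c * a * (b * c * b) := by rw [hbc]; group
    _ = c * (a * b * c) * a * b := by rw [(semiconjBy_braid_fork hab hac hbc).eq]; group
    _ = c * (a * b * c) * (a * b) := by group

lemma semiconjBy_mul_of_commute_of_braid {d x y : G} (hd : Commute d y)
    (hxy : x * y * x = y * x * y) : SemiconjBy (d * x * y) x y :=
  calc d * x * y * x = d * (y * x * y) := by rw [← hxy]; group
    _ = d * y * x * y := by group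
    _ = y * (d * x * y) := by rw [hd.eq]; group

lemma mul_sq_eq_of_commute_of_braid {d x y : G} (hd : Commute d y) (hxy : x * y * x = y * x * y)
    (h : (d * x) ^ 2 = c * (d * x) * d) : (d * x * y) ^ 2 = c * (d * x * y) * (d * x) :=
  calc (d * x * y) ^ 2 = d * x * (y * d) * x * y := by rw [sq]; group
    _ = d * x * d * (y * x * y) := by rw [← hd.eq]; group
    _ = (d * x) ^ 2 * y * x := by rw [← hxy, sq]; group
    _ = c * (d * x) * d * y * x := by rw [h]
    _ = c * (d * x * y) * (d * x) := by rw [mul_assoc _ d y, hd.eq]; group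

lemma commute_pow_of_semiconjBy_swap {u : G} (hab : SemiconjBy u a b) (hba : SemiconjBy u b a)
    {j : ℕ} (hj : Even j) : Commute (u ^ j) a := by
  obtain ⟨k, rfl⟩ := hj
  rw [← two_mul, pow_mul, sq]
  exact Commute.pow_left (hba.mul_left hab) k

lemma prod_range_map_conj_pow_mul_pow (x d : G) (j : ℕ) :
    ((List.range j).map fun k => d ^ k * x * (d ^ k)⁻¹).prod * d ^ j = (x * d) ^ j := by
  induction j with
  | zero => simp
  | succ j ih => rw [List.prod_range_succ, pow_succ (x * d), ← ih]; group

end BraidWords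

namespace PresentedGroup

lemma mem_center_of_forall_commute_of {α : Type*} {rels : Set (FreeGroup α)}
    {g : PresentedGroup rels} (h : ∀ x, Commute g (of x)) : g ∈ Subgroup.center _ :=
  Subgroup.mem_center_iff.mpr fun y => Subgroup.mem_centralizer_singleton_iff.mp <|
    generated_by rels _ (fun x => Subgroup.mem_centralizer_singleton_iff.mpr (h x).eq.symm) y

end PresentedGroup

namespace ArtinD

variable {n : ℕ}

/-- The generator `g_{k+1}` for `k < n`, and `1` for `k ≥ n`; the junk value makes every
commutation relation hold without an upper bound on the indices. -/
def gen (n k : ℕ) : ArtinD n := if h : k < n then gD n ⟨k, h⟩ else 1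

lemma gen_of_lt {k : ℕ} (h : k < n) : gen n k = gD n ⟨k, h⟩ := dif_pos h

lemma gen_of_le {k : ℕ} (h : n ≤ k) : gen n k = 1 := dif_neg h.not_gt

lemma gD_braid {i j : Fin n} (hij : i < j) (hJ : DnJoined n i j) :
    gD n i * gD n j * gD n i = gD n j * gD n i * gD n j := by
  have h := PresentedGroup.one_of_mem (rels := DnRels n) ⟨i, j, hij, .inl ⟨hJ, rfl⟩⟩
  simp only [braidRel, map_mul, map_inv, mul_inv_eq_one] at h
  exact h

lemma gD_commute {i j : Fin n} (hij : i < j) (hNJ : ¬ DnJoined n i j) :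
    Commute (gD n i) (gD n j) := by
  have h := PresentedGroup.one_of_mem (rels := DnRels n) ⟨i, j, hij, .inr ⟨hNJ, rfl⟩⟩
  simp only [commRel, map_mul, map_inv, mul_inv_eq_one] at h
  exact h

lemma gen_commute {k l : ℕ} (hkl : k < l)
    (hNJ : ¬ ((k = 0 ∧ l = 2) ∨ (k = 1 ∧ l = 2) ∨ (2 ≤ k ∧ l = k + 1))) :
    Commute (gen n k) (gen n l) := by
  rcases lt_or_ge l n with hl | hl
  · rw [gen_of_lt (hkl.trans hl), gen_of_lt hl]
    exact gD_commute (Fin.mk_lt_mk.mpr hkl) (by simpa [DnJoined] using hNJ)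
  · rw [gen_of_le hl]
    exact Commute.one_right _

lemma gen_braid {k l : ℕ} (hkl : k < l) (hl : l < n)
    (hJ : (k = 0 ∧ l = 2) ∨ (k = 1 ∧ l = 2) ∨ (2 ≤ k ∧ l = k + 1)) :
    gen n k * gen n l * gen n k = gen n l * gen n k * gen n l := by
  rw [gen_of_lt (hkl.trans hl), gen_of_lt hl]
  exact gD_braid (Fin.mk_lt_mk.mpr hkl) hJ

def coxPrefix (n m : ℕ) : ArtinD n := ((List.range m).map (gen n)).prod

abbrev coxeter (n : ℕ) : ArtinD n := coxPrefix n n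

lemma coxPrefix_succ (m : ℕ) : coxPrefix n (m + 1) = coxPrefix n m * gen n m :=
  List.prod_range_succ _ _

lemma coxPrefix_add (m j : ℕ) :
    coxPrefix n (m + j) = coxPrefix n m * ((List.range j).map (fun k => gen n (m + k))).prod := by
  rw [coxPrefix, List.range_add, List.map_append, List.prod_append, List.map_map]
  rfl

lemma coxPrefix_two : coxPrefix n 2 = gen n 0 * gen n 1 := by
  simp [coxPrefix, List.range_succ]

lemma coxPrefix_three : coxPrefix n 3 = gen n 0 * gen n 1 * gen n 2 := by
  rw [coxPrefix_succ, coxPrefix_two]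

lemma ofFn_gD_eq_map_range : List.ofFn (gD n) = (List.range n).map (gen n) := by
  apply List.ext_getElem (by simp)
  intro i h _
  simp [gen_of_lt (List.length_ofFn (f := gD n) ▸ h)]

lemma deltaD_eq_coxeter_pow : DeltaD n = coxeter n ^ (n - 1) := by
  rw [DeltaD, ofFn_gD_eq_map_range]
  rfl

lemma commute_coxPrefix_gen {k j : ℕ} (h3 : 3 ≤ j) (hkj : k < j) :
    Commute (coxPrefix n k) (gen n j) :=
  Commute.list_prod_left _ _ fun _ hx => by
    obtain ⟨i, hi, rfl⟩ := List.mem_map.mp hx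
    exact gen_commute (by simp at hi; omega) (by simp at hi; omega)

lemma semiconjBy_coxPrefix_gen {k m : ℕ} (h2 : 2 ≤ k) (hkm : k + 2 ≤ m) (hmn : m ≤ n) :
    SemiconjBy (coxPrefix n m) (gen n k) (gen n (k + 1)) := by
  induction m, hkm using Nat.le_induction with
  | base =>
    rw [coxPrefix_succ, coxPrefix_succ]
    exact semiconjBy_mul_of_commute_of_braid (commute_coxPrefix_gen (by omega) (by omega))
      (gen_braid (by omega) (by omega) (by omega))
  | succ m hm ih =>
    rw [coxPrefix_succ]
    exact (ih (by omega)).mul_left (gen_commute (by omega) (by omega)).symm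

lemma coxPrefix_succ_sq {m : ℕ} (h2 : 2 ≤ m) (hmn : m < n) :
    coxPrefix n (m + 1) ^ 2 = gen n 2 * coxPrefix n (m + 1) * coxPrefix n m := by
  induction m, h2 using Nat.le_induction with
  | base =>
    rw [coxPrefix_three, coxPrefix_two]
    exact braid_fork_sq (gen_commute (by omega) (by omega)) (gen_braid (by omega) hmn (by omega))
      (gen_braid (by omega) hmn (by omega))
  | succ m hm ih =>
    rw [coxPrefix_succ, coxPrefix_succ]
    refine mul_sq_eq_of_commute_of_braid (commute_coxPrefix_gen (by omega) (by omega))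
      (gen_braid (by omega) hmn (by omega)) ?_
    rw [← coxPrefix_succ, ih (by omega), coxPrefix_succ]

lemma semiconjBy_coxeter_sq (h3 : 3 ≤ n) :
    SemiconjBy (coxeter n ^ 2) (gen n (n - 1)) (gen n 2) := by
  have hsq := coxPrefix_succ_sq (n := n) (m := n - 1) (by omega) (by omega)
  have hsucc := coxPrefix_succ (n := n) (n - 1)
  rw [Nat.sub_add_cancel (by omega : 1 ≤ n)] at hsq hsucc
  calc coxeter n ^ 2 * gen n (n - 1)
      = gen n 2 * coxeter n * (coxPrefix n (n - 1) * gen n (n - 1)) := by rw [hsq, mul_assoc]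
    _ = gen n 2 * coxeter n ^ 2 := by rw [← hsucc, mul_assoc, sq]

lemma semiconjBy_coxeter_pow {k : ℕ} (hk : k + 3 ≤ n) :
    SemiconjBy (coxeter n ^ k) (gen n 2) (gen n (2 + k)) := by
  induction k with
  | zero => simp
  | succ k ih =>
    rw [pow_succ']
    exact (semiconjBy_coxPrefix_gen (k := 2 + k) (by omega) (by omega) le_rfl).mul_left
      (ih (by omega))

lemma commute_coxeter_pow_gen_two (h3 : 3 ≤ n) :
    Commute (coxeter n ^ (n - 1)) (gen n 2) := by
  have hpow := semiconjBy_coxeter_pow (n := n) (k := n - 3) (by omega)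
  rw [show 2 + (n - 3) = n - 1 by omega] at hpow
  have h := (semiconjBy_coxeter_sq h3).mul_left hpow
  rwa [← pow_add, show 2 + (n - 3) = n - 1 by omega] at h

lemma commute_coxeter_pow_gen {k : ℕ} (h2 : 2 ≤ k) (hk : k < n) :
    Commute (coxeter n ^ (n - 1)) (gen n k) := by
  have hpow := semiconjBy_coxeter_pow (n := n) (k := k - 2) (by omega)
  rw [Nat.add_sub_cancel' h2] at hpow
  rw [eq_mul_inv_of_mul_eq hpow.eq.symm]
  have hc := Commute.pow_pow_self (coxeter n) (n - 1) (k - 2)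
  exact (hc.mul_right (commute_coxeter_pow_gen_two (by omega))).mul_right hc.inv_right

lemma semiconjBy_gen_two_mul_coxeter {i j : ℕ} (hij : i = 0 ∧ j = 1 ∨ i = 1 ∧ j = 0)
    (h3 : 3 ≤ n) : SemiconjBy (gen n 2 * coxeter n) (gen n i) (gen n j) := by
  have hsplit : coxeter n =
      coxPrefix n 3 * ((List.range (n - 3)).map fun k => gen n (3 + k)).prod := by
    rw [← coxPrefix_add, Nat.add_sub_cancel' h3]
  have h01 : Commute (gen n 0) (gen n 1) := gen_commute (by omega) (by omega)
  have h02 : gen n 0 * gen n 2 * gen n 0 = gen n 2 * gen n 0 * gen n 2 :=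
    gen_braid (by omega) (by omega) (by omega)
  have h12 : gen n 1 * gen n 2 * gen n 1 = gen n 2 * gen n 1 * gen n 2 :=
    gen_braid (by omega) (by omega) (by omega)
  have hfork : SemiconjBy (gen n 2 * coxPrefix n 3) (gen n i) (gen n j) := by
    rw [coxPrefix_three]
    rcases hij with ⟨rfl, rfl⟩ | ⟨rfl, rfl⟩
    · exact semiconjBy_braid_fork h01 h02 h12
    · rw [h01.eq]
      exact semiconjBy_braid_fork h01.symm h12 h02
  have htail : Commute ((List.range (n - 3)).map fun k => gen n (3 + k)).prod (gen n i) :=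
    Commute.list_prod_left _ _ fun _ hx => by
      obtain ⟨k, -, rfl⟩ := List.mem_map.mp hx
      exact (gen_commute (by omega) (by omega)).symm
  rw [hsplit, ← mul_assoc]
  exact hfork.mul_left htail

lemma coxeter_pow_eq (h2 : 2 ≤ n) :
    coxeter n ^ (n - 1) = gen n 0 * gen n 1 * (gen n 2 * coxeter n) ^ (n - 2) := by
  have hsplit : coxeter n =
      gen n 0 * gen n 1 * ((List.range (n - 2)).map fun k => gen n (2 + k)).prod := by
    rw [← coxPrefix_two, ← coxPrefix_add, Nat.add_sub_cancel' h2]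
  have hconj : ((List.range (n - 2)).map fun k => gen n (2 + k)) =
      (List.range (n - 2)).map fun k => coxeter n ^ k * gen n 2 * (coxeter n ^ k)⁻¹ :=
    List.map_congr_left fun k hk =>
      eq_mul_inv_of_mul_eq (semiconjBy_coxeter_pow (by simp at hk; omega)).eq.symm
  calc coxeter n ^ (n - 1) = coxeter n * coxeter n ^ (n - 2) := by
        rw [← pow_succ', show n - 2 + 1 = n - 1 by omega]
    _ = gen n 0 * gen n 1 * (gen n 2 * coxeter n) ^ (n - 2) := by
        nth_rewrite 1 [hsplit]
        rw [hconj, mul_assoc, prod_range_map_conj_pow_mul_pow]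

lemma commute_coxeter_pow_gen_of_lt_two (heven : Even n) {i : ℕ} (hi : i < 2) (hn : 2 ≤ n) :
    Commute (coxeter n ^ (n - 1)) (gen n i) := by
  have h01 : Commute (gen n 0) (gen n 1) := gen_commute (by omega) (by omega)
  rw [coxeter_pow_eq hn]
  refine Commute.mul_left ?_ ?_
  · interval_cases i
    · exact (Commute.refl _).mul_left h01.symm
    · exact h01.mul_left (Commute.refl _)
  · rcases hn.eq_or_lt with rfl | hn3
    · simp
    · exact commute_pow_of_semiconjBy_swap
        (semiconjBy_gen_two_mul_coxeter (j := 1 - i) (by omega) hn3)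
        (semiconjBy_gen_two_mul_coxeter (i := 1 - i) (by omega) hn3)
        ((Nat.even_sub hn).mpr (by simp [heven]))

lemma commute_coxeter_pow_gD (heven : Even n) (i : Fin n) :
    Commute (coxeter n ^ (n - 1)) (gD n i) := by
  rw [← gen_of_lt i.isLt]
  rcases lt_or_ge i.val 2 with hi | hi
  · exact commute_coxeter_pow_gen_of_lt_two heven hi (by have := Nat.even_iff.mp heven; omega)
  · exact commute_coxeter_pow_gen hi i.isLt

end ArtinD

theorem statement1_general (n : ℕ) (heven : Even n) :
    DeltaD n ∈ Subgroup.center (ArtinD n) ∧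
    ∀ i : Fin n, DeltaD n * gD n i * (DeltaD n)⁻¹ = gD n i := by
  have hcomm : ∀ i, Commute (DeltaD n) (gD n i) := fun i => by
    rw [ArtinD.deltaD_eq_coxeter_pow]
    exact ArtinD.commute_coxeter_pow_gD heven i
  refine ⟨PresentedGroup.mem_center_of_forall_commute_of hcomm, fun i => ?_⟩
  rw [(hcomm i).eq, mul_inv_cancel_right]

/-- For even `n ≥ 2`, the fundamental element `Δ = (g_1 ⋯ g_n)^{n-1}` is central in
`A(D_n)`; in particular it conjugates every generator to itself. -/
theorem statement1 (n : ℕ) (hn : 2 ≤ n) (heven : Even n) :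
    DeltaD n ∈ Subgroup.center (ArtinD n) ∧
    ∀ i : Fin n, DeltaD n * gD n i * (DeltaD n)⁻¹ = gD n i :=
  statement1_general n heven
end

section
/- Let n ≥ 2 and let σ be the coordinatewise squaring map σ(x_1,…,x_n) = (x_1²,…,x_n²). Then σ restricts to a covering map of degree 2^n from V_0 = {x ∈ (ℂ∖{0})^n : x_i ≠ x_j and x_i ≠ −x_j whenever i ≠ j} onto the ordered configuration space Conf_n(ℂ∖{0}), whose deck transformations are exactly the 2^n sign-change maps (x_1,…,x_n) ↦ (ε_1 x_1,…,ε_n x_n) with ε_i ∈ {±1}; moreover σ is equivariant for the permutation actions of S_n on its domain and range. -/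
open scoped Classical

/-- The complexified hyperplane complement of the `B_n` reflection arrangement:
`V_0 = {x ∈ (ℂ∖{0})^n : x_i ≠ ±x_j whenever i ≠ j}`. -/
def V0B (n : ℕ) : Set (Fin n → ℂ) :=
  { x | (∀ i, x i ≠ 0) ∧ ∀ i j : Fin n, i ≠ j → x i ≠ x j ∧ x i ≠ -x j }

/-- The ordered configuration space `Conf_n(ℂ∖{0})`, as a subset of `ℂ^n`. -/
def ConfB (n : ℕ) : Set (Fin n → ℂ) :=
  { z | (∀ i, z i ≠ 0) ∧ ∀ i j : Fin n, i ≠ j → z i ≠ z j }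

/-- Coordinatewise squaring maps `V_0` into `Conf_n(ℂ∖{0})`. -/
theorem sq_mapsTo (n : ℕ) :
    Set.MapsTo (fun x : Fin n → ℂ => fun i => x i ^ 2) (V0B n) (ConfB n) := by
  rintro x ⟨hx0, hx⟩
  refine ⟨fun i => pow_ne_zero 2 (hx0 i), fun i j hij => ?_⟩
  intro h
  rcases (sq_eq_sq_iff_eq_or_eq_neg (R := ℂ)).mp h with h' | h'
  · exact (hx i j hij).1 h'
  · exact (hx i j hij).2 h'

/-- The coordinatewise squaring map, restricted to a map `V_0 → Conf_n(ℂ∖{0})`. -/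
def sqRestrict (n : ℕ) : V0B n → ConfB n := (sq_mapsTo n).restrict _ _ _

/-! ### Auxiliary material -/

noncomputable def sgnC (b : Bool) : ℂ := if b then 1 else -1

lemma sgnC_ne_zero (b : Bool) : sgnC b ≠ 0 := by cases b <;> simp [sgnC]
lemma sgnC_sq (b : Bool) : sgnC b ^ 2 = 1 := by cases b <;> simp [sgnC]

lemma sqRestrict_val (n : ℕ) (x : V0B n) :
    (sqRestrict n x : Fin n → ℂ) = fun i => (x : Fin n → ℂ) i ^ 2 := rfl

lemma V0B_nonempty (n : ℕ) : ∃ x : Fin n → ℂ, x ∈ V0B n := by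
  refine ⟨fun i => ((i : ℕ) : ℂ) + 1, fun i => ?_, fun i j hij => ?_⟩
  · intro h
    have : (((i : ℕ) + 1 : ℕ) : ℂ) = 0 := by push_cast; linear_combination h
    rw [Nat.cast_eq_zero] at this
    omega
  constructor
  · intro h
    apply hij
    have : ((i : ℕ) : ℂ) = ((j : ℕ) : ℂ) := by linear_combination h
    exact Fin.ext (by exact_mod_cast this)
  · intro h
    have : (((i : ℕ) + (j : ℕ) + 2 : ℕ) : ℂ) = 0 := by push_cast; linear_combination h
    rw [Nat.cast_eq_zero] at this
    omega

lemma signs_mem_V0B (n : ℕ) (z : ConfB n) (c : Fin n → ℂ) (hc : ∀ i, c i ^ 2 = (z : Fin n → ℂ) i)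
    (s : Fin n → ℂ) (hs : ∀ i, s i ^ 2 = 1) :
    (fun i => s i * c i) ∈ V0B n := by
  obtain ⟨hz0, hz⟩ := z.2
  have hsq : ∀ i, (s i * c i) ^ 2 = (z : Fin n → ℂ) i := by
    intro i; rw [mul_pow, hs i, one_mul, hc i]
  have hne : ∀ i, s i * c i ≠ 0 := by
    intro i h
    apply hz0 i
    rw [← hsq i, h]; ring
  refine ⟨hne, fun i j hij => ?_⟩
  constructor
  · intro h
    simp only at h
    exact hz i j hij (by rw [← hsq i, ← hsq j, h])
  · intro h
    simp only at h
    exact hz i j hij (by rw [← hsq i, ← hsq j, h]; ring)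

lemma continuous_sqRestrict (n : ℕ) : Continuous (sqRestrict n) := by
  apply Continuous.restrict
  exact continuous_pi fun i => ((continuous_apply i).pow 2)

/-! ### Counting the fibers -/

noncomputable def fiberEquiv (n : ℕ) (z : ConfB n) (c : Fin n → ℂ)
    (hc : ∀ i, c i ^ 2 = (z : Fin n → ℂ) i) :
    (Fin n → Bool) ≃ { x : V0B n // sqRestrict n x = z } where
  toFun b := ⟨⟨fun i => sgnC (b i) * c i,
      signs_mem_V0B n z c hc _ (fun i => sgnC_sq (b i))⟩, by
    apply Subtype.ext
    funext i
    show (sgnC (b i) * c i) ^ 2 = _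
    rw [mul_pow, sgnC_sq, one_mul, hc i]⟩
  invFun x := fun i => decide ((x.1 : Fin n → ℂ) i = c i)
  left_inv b := by
    funext i
    have hc0 : c i ≠ 0 := by
      intro h
      exact z.2.1 i (by rw [← hc i, h]; ring)
    have hnc : -c i ≠ c i := fun h => hc0 (by linear_combination -h / 2)
    cases hb : b i <;> simp [hb, sgnC, hc0, hnc]
  right_inv x := by
    apply Subtype.ext; apply Subtype.ext
    funext i
    have hx2 : (x.1 : Fin n → ℂ) i ^ 2 = (z : Fin n → ℂ) i := by
      have := congrArg (fun w : ConfB n => (w : Fin n → ℂ) i) x.2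
      simpa [sqRestrict_val] using this
    have hsq : (x.1 : Fin n → ℂ) i ^ 2 = c i ^ 2 := by rw [hc i]; exact hx2
    rcases (sq_eq_sq_iff_eq_or_eq_neg (R := ℂ)).mp hsq with h | h
    · simp [h, sgnC]
    · have hc0 : c i ≠ 0 := by
        intro h0
        exact z.2.1 i (by rw [← hc i, h0]; ring)
      have hne : (x.1 : Fin n → ℂ) i ≠ c i := by
        rw [h]; intro h2
        exact hc0 (by linear_combination -h2 / 2)
      simp only [hne, h, sgnC, decide_eq_true_eq, if_neg hne]
      cases hd : decide ((-c i : ℂ) = c i) <;> simp_all [sgnC]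

/-! ### Path-connectivity of `V0B` -/

lemma affine_root_subsingleton (p q : ℂ) (hp : p ≠ 0) :
    {t : ℂ | p + t * q = 0}.Subsingleton := by
  intro t1 h1 t2 h2
  simp only [Set.mem_setOf_eq] at h1 h2
  by_cases hq : q = 0
  · exact absurd (by simpa [hq] using h1) hp
  · have h3 : (t1 - t2) * q = 0 := by linear_combination h1 - h2
    rcases mul_eq_zero.mp h3 with h | h
    · exact sub_eq_zero.mp h
    · exact absurd h hq

lemma isPathConnected_V0B (n : ℕ) : IsPathConnected (V0B n) := by
  obtain ⟨x0, hx0⟩ := V0B_nonempty n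
  refine ⟨x0, hx0, ?_⟩
  intro b hb
  set a := x0 with ha
  obtain ⟨ha0, haij⟩ := hx0
  obtain ⟨hb0, hbij⟩ := hb
  set L : ℂ → (Fin n → ℂ) := fun t i => a i + t * (b i - a i) with hL
  have hLcont : Continuous L := by
    apply continuous_pi
    intro i
    continuity
  set S : Set ℂ := {t | L t ∉ V0B n} with hS
  have hScount : S.Countable := by
    have hsub : S ⊆ (⋃ i : Fin n, {t : ℂ | a i + t * (b i - a i) = 0}) ∪
        (⋃ i : Fin n, ⋃ j : Fin n, ⋃ _ : i ≠ j,
          ({t : ℂ | (a i - a j) + t * ((b i - b j) - (a i - a j)) = 0} ∪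
           {t : ℂ | (a i + a j) + t * ((b i + b j) - (a i + a j)) = 0})) := by
      intro t ht
      simp only [hS, Set.mem_setOf_eq, V0B] at ht
      push_neg at ht
      rcases Classical.em (∀ i, L t i ≠ 0) with hall | hnall
      swap
      · push_neg at hnall
        obtain ⟨i, hi⟩ := hnall
        exact Or.inl (Set.mem_iUnion.mpr ⟨i, by simpa [hL] using hi⟩)
      · right
        obtain ⟨i, j, hij, hcond⟩ := ht hall
        refine Set.mem_iUnion.mpr ⟨i, Set.mem_iUnion.mpr ⟨j, Set.mem_iUnion.mpr ⟨hij, ?_⟩⟩⟩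
        by_cases h' : L t i = L t j
        · left
          simp only [Set.mem_setOf_eq]
          simp only [hL] at h'
          linear_combination h'
        · have h := hcond h'
          right
          simp only [Set.mem_setOf_eq]
          simp only [hL] at h
          linear_combination h
    refine Set.Countable.mono hsub ?_
    apply Set.Countable.union
    · exact Set.countable_iUnion fun i =>
        (affine_root_subsingleton _ _ (ha0 i)).countable
    · refine Set.countable_iUnion fun i => Set.countable_iUnion fun j =>
        Set.countable_iUnion fun hij => Set.Countable.union ?_ ?_
      · exact (affine_root_subsingleton _ _ (sub_ne_zero.mpr (haij i j hij).1)).countable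
      · have : a i + a j ≠ 0 := fun h => (haij i j hij).2 (by linear_combination h)
        exact (affine_root_subsingleton _ _ this).countable
  have hpc : IsPathConnected Sᶜ := by
    apply hScount.isPathConnected_compl_of_one_lt_rank
    rw [Complex.rank_real_complex]
    norm_num
  have h0 : (0 : ℂ) ∈ Sᶜ := by
    simp only [hS, Set.mem_compl_iff, Set.mem_setOf_eq, not_not]
    have : L 0 = a := by funext i; simp [hL]
    rw [this]; exact ⟨ha0, haij⟩
  have h1 : (1 : ℂ) ∈ Sᶜ := by
    simp only [hS, Set.mem_compl_iff, Set.mem_setOf_eq, not_not]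
    have : L 1 = b := by funext i; simp [hL]
    rw [this]; exact ⟨hb0, hbij⟩
  obtain ⟨γ, hγ⟩ := hpc.joinedIn 0 h0 1 h1
  have hL0 : L 0 = a := by funext i; simp [hL]
  have hL1 : L 1 = b := by funext i; simp [hL]
  exact ⟨(γ.map hLcont).cast hL0.symm hL1.symm, fun t => by
    have := hγ t
    simp only [Set.mem_compl_iff, hS, Set.mem_setOf_eq, not_not] at this
    simpa using this⟩
section Triv
variable (n : ℕ) (z₀ : ConfB n)

/-- local square root branch adapted to `z₀` in coordinate `i`, given a fixed
square root `c i` of `z₀ i`. -/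
noncomputable def gbr (c : Fin n → ℂ) (i : Fin n) (w : ℂ) : ℂ :=
  Complex.exp (Complex.log (w / (z₀ : Fin n → ℂ) i) / 2) * c i

lemma gbr_sq (c : Fin n → ℂ) (hc : ∀ i, c i ^ 2 = (z₀ : Fin n → ℂ) i)
    (i : Fin n) (w : ℂ) (hw : w ≠ 0) : gbr n z₀ c i w ^ 2 = w := by
  have hz : (z₀ : Fin n → ℂ) i ≠ 0 := z₀.2.1 i
  have hu : w / (z₀ : Fin n → ℂ) i ≠ 0 := div_ne_zero hw hz
  have : Complex.exp (Complex.log (w / (z₀ : Fin n → ℂ) i) / 2) ^ 2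
      = w / (z₀ : Fin n → ℂ) i := by
    rw [← Complex.exp_nat_mul]
    push_cast
    rw [show (2 : ℂ) * (Complex.log (w / (z₀ : Fin n → ℂ) i) / 2)
        = Complex.log (w / (z₀ : Fin n → ℂ) i) by ring]
    exact Complex.exp_log hu
  rw [gbr, mul_pow, this, hc i]
  field_simp

lemma gbr_ne_zero (c : Fin n → ℂ) (hc : ∀ i, c i ^ 2 = (z₀ : Fin n → ℂ) i)
    (i : Fin n) (w : ℂ) : gbr n z₀ c i w ≠ 0 := by
  have hci : c i ≠ 0 := by
    intro h
    exact z₀.2.1 i (by rw [← hc i, h]; ring)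
  exact mul_ne_zero (Complex.exp_ne_zero _) hci

lemma gbr_continuousAt (c : Fin n → ℂ) (i : Fin n) (w : ℂ)
    (hw : 0 < (w / (z₀ : Fin n → ℂ) i).re) : ContinuousAt (gbr n z₀ c i) w := by
  apply ContinuousAt.mul _ continuousAt_const
  apply Complex.continuous_exp.continuousAt.comp
  apply ContinuousAt.div_const
  exact ContinuousAt.clog (continuousAt_id.div_const _) (Or.inl hw)

end Triv

section Triv2
variable (n : ℕ) (z₀ : ConfB n) (c : Fin n → ℂ)

/-- the base set for the trivialization near `z₀`. -/
def trivBase : Set (ConfB n) :=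
  { z : ConfB n | ∀ i, 0 < ((z : Fin n → ℂ) i / (z₀ : Fin n → ℂ) i).re }

lemma isOpen_trivBase : IsOpen (trivBase n z₀) := by
  have : trivBase n z₀ = ⋂ i, (fun z : ConfB n =>
      ((z : Fin n → ℂ) i / (z₀ : Fin n → ℂ) i).re) ⁻¹' Set.Ioi 0 := by
    ext z; simp [trivBase, Set.mem_iInter]
  rw [this]
  apply isOpen_iInter_of_finite
  intro i
  apply IsOpen.preimage _ isOpen_Ioi
  exact (Complex.continuous_re.comp (((continuous_apply i).comp
    continuous_subtype_val).div_const _))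

lemma z₀_mem_trivBase : z₀ ∈ trivBase n z₀ := by
  intro i
  rw [div_self (z₀.2.1 i)]
  norm_num

/-- candidate inverse point -/
noncomputable def invPt (hc : ∀ i, c i ^ 2 = (z₀ : Fin n → ℂ) i) (p : ConfB n × (Fin n → Bool)) : V0B n :=
  ⟨fun i => sgnC (p.2 i) * gbr n z₀ c i ((p.1 : Fin n → ℂ) i),
    signs_mem_V0B n p.1 (fun i => gbr n z₀ c i ((p.1 : Fin n → ℂ) i))
      (fun i => gbr_sq n z₀ c hc i _ (p.1.2.1 i))
      (fun i => sgnC (p.2 i)) (fun i => sgnC_sq _)⟩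

lemma sq_invPt (hc : ∀ i, c i ^ 2 = (z₀ : Fin n → ℂ) i) (p : ConfB n × (Fin n → Bool)) :
    sqRestrict n (invPt n z₀ c hc p) = p.1 := by
  apply Subtype.ext
  funext i
  show (sgnC (p.2 i) * gbr n z₀ c i ((p.1 : Fin n → ℂ) i)) ^ 2 = _
  rw [mul_pow, sgnC_sq, one_mul, gbr_sq n z₀ c hc i _ (p.1.2.1 i)]

/-- squares of points of `V0B` agree with the branch squares -/
lemma val_eq_or_neg (hc : ∀ i, c i ^ 2 = (z₀ : Fin n → ℂ) i) (x : V0B n) (i : Fin n) :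
    (x : Fin n → ℂ) i = gbr n z₀ c i ((x : Fin n → ℂ) i ^ 2) ∨
    (x : Fin n → ℂ) i = -gbr n z₀ c i ((x : Fin n → ℂ) i ^ 2) := by
  have h2 : ((x : Fin n → ℂ) i) ^ 2 = gbr n z₀ c i ((x : Fin n → ℂ) i ^ 2) ^ 2 :=
    (gbr_sq n z₀ c hc i _ (pow_ne_zero 2 (x.2.1 i))).symm
  exact (sq_eq_sq_iff_eq_or_eq_neg (R := ℂ)).mp h2

/-- The trivialization of the squaring map near `z₀ : ConfB n`. -/
noncomputable def trivAt (hc : ∀ i, c i ^ 2 = (z₀ : Fin n → ℂ) i) :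
    Bundle.Trivialization (Fin n → Bool) (sqRestrict n) where
  toFun x := (sqRestrict n x,
    fun i => decide ((x : Fin n → ℂ) i = gbr n z₀ c i ((x : Fin n → ℂ) i ^ 2)))
  invFun p := invPt n z₀ c hc p
  source := sqRestrict n ⁻¹' trivBase n z₀
  target := trivBase n z₀ ×ˢ Set.univ
  map_source' x hx := ⟨hx, trivial⟩
  map_target' p hp := by
    show sqRestrict n _ ∈ trivBase n z₀
    rw [sq_invPt n z₀ c hc p]
    exact hp.1
  left_inv' x _ := by
    apply Subtype.ext
    funext i
    show sgnC (decide ((x : Fin n → ℂ) i = gbr n z₀ c i ((x : Fin n → ℂ) i ^ 2)))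
        * gbr n z₀ c i ((x : Fin n → ℂ) i ^ 2) = (x : Fin n → ℂ) i
    rcases val_eq_or_neg n z₀ c hc x i with h | h
    · rw [decide_eq_true h, sgnC, if_pos rfl, one_mul]
      exact h.symm
    · have hne : (x : Fin n → ℂ) i ≠ gbr n z₀ c i ((x : Fin n → ℂ) i ^ 2) := by
        intro h2
        exact gbr_ne_zero n z₀ c hc i ((x : Fin n → ℂ) i ^ 2)
          (by linear_combination (h - h2)/2)
      rw [decide_eq_false hne, sgnC, if_neg (by simp), neg_one_mul]
      linear_combination -h
  right_inv' p _ := by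
    have h1 : sqRestrict n (invPt n z₀ c hc p) = p.1 := sq_invPt n z₀ c hc p
    refine Prod.ext h1 ?_
    funext i
    have hsq : ((invPt n z₀ c hc p : Fin n → ℂ) i) ^ 2 = (p.1 : Fin n → ℂ) i := by
      have := congrArg (fun w : ConfB n => (w : Fin n → ℂ) i) h1
      simpa [sqRestrict_val] using this
    show decide ((invPt n z₀ c hc p : Fin n → ℂ) i
        = gbr n z₀ c i ((invPt n z₀ c hc p : Fin n → ℂ) i ^ 2)) = p.2 i
    rw [hsq]
    have hval : (invPt n z₀ c hc p : Fin n → ℂ) i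
        = sgnC (p.2 i) * gbr n z₀ c i ((p.1 : Fin n → ℂ) i) := rfl
    have hg0 := gbr_ne_zero n z₀ c hc i ((p.1 : Fin n → ℂ) i)
    cases hb : p.2 i
    · apply decide_eq_false
      rw [hval, hb, sgnC, if_neg (by simp)]
      intro h2
      exact hg0 (by linear_combination -h2/2)
    · apply decide_eq_true
      rw [hval, hb, sgnC, if_pos rfl, one_mul]
  open_source := (isOpen_trivBase n z₀).preimage (continuous_sqRestrict n)
  open_target := (isOpen_trivBase n z₀).prod isOpen_univ
  continuousOn_toFun := by
    apply ContinuousOn.prodMk ((continuous_sqRestrict n).continuousOn)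
    apply continuousOn_pi.mpr
    intro i
    intro x hx
    have hxs : 0 < (((x : Fin n → ℂ) i ^ 2) / (z₀ : Fin n → ℂ) i).re := hx i
    have hq : ContinuousWithinAt (fun y : V0B n => gbr n z₀ c i ((y : Fin n → ℂ) i ^ 2))
        (sqRestrict n ⁻¹' trivBase n z₀) x := by
      apply ContinuousAt.continuousWithinAt
      have hinner : ContinuousAt (fun y : V0B n => (y : Fin n → ℂ) i ^ 2) x :=
        (((continuous_apply i).comp continuous_subtype_val).pow 2).continuousAt
      exact ContinuousAt.comp (g := gbr n z₀ c i)
        (f := fun y : V0B n => (y : Fin n → ℂ) i ^ 2)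
        (gbr_continuousAt n z₀ c i ((x : Fin n → ℂ) i ^ 2) hxs) hinner
    have hval : ContinuousWithinAt (fun y : V0B n => (y : Fin n → ℂ) i)
        (sqRestrict n ⁻¹' trivBase n z₀) x :=
      (((continuous_apply i).comp continuous_subtype_val)).continuousWithinAt
    rcases val_eq_or_neg n z₀ c hc x i with h | h
    · -- locally the sign is `true`
      have hr : ContinuousWithinAt
          (fun y : V0B n => (y : Fin n → ℂ) i + gbr n z₀ c i ((y : Fin n → ℂ) i ^ 2))
          (sqRestrict n ⁻¹' trivBase n z₀) x := hval.add hq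
      have hrx : (x : Fin n → ℂ) i + gbr n z₀ c i ((x : Fin n → ℂ) i ^ 2) ≠ 0 := by
        intro h2
        exact x.2.1 i (by linear_combination h2/2 + h/2)
      have hev : ∀ᶠ y in nhdsWithin x (sqRestrict n ⁻¹' trivBase n z₀),
          (fun y : V0B n => decide ((y : Fin n → ℂ) i
            = gbr n z₀ c i ((y : Fin n → ℂ) i ^ 2))) y = true := by
        filter_upwards [hr.eventually_ne hrx] with y hy
        rcases val_eq_or_neg n z₀ c hc y i with h' | h'
        · exact decide_eq_true h'
        · exact absurd (by linear_combination h') hy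
      exact (continuousWithinAt_const (b := true)).congr_of_eventuallyEq hev (decide_eq_true h)
    · -- locally the sign is `false`
      have hr : ContinuousWithinAt
          (fun y : V0B n => (y : Fin n → ℂ) i - gbr n z₀ c i ((y : Fin n → ℂ) i ^ 2))
          (sqRestrict n ⁻¹' trivBase n z₀) x := hval.sub hq
      have hrx : (x : Fin n → ℂ) i - gbr n z₀ c i ((x : Fin n → ℂ) i ^ 2) ≠ 0 := by
        intro h2
        exact gbr_ne_zero n z₀ c hc i ((x : Fin n → ℂ) i ^ 2)
          (by linear_combination (h - h2)/2)
      have hxne : (x : Fin n → ℂ) i ≠ gbr n z₀ c i ((x : Fin n → ℂ) i ^ 2) := by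
        intro h2
        exact gbr_ne_zero n z₀ c hc i ((x : Fin n → ℂ) i ^ 2)
          (by linear_combination (h - h2)/2)
      have hev : ∀ᶠ y in nhdsWithin x (sqRestrict n ⁻¹' trivBase n z₀),
          (fun y : V0B n => decide ((y : Fin n → ℂ) i
            = gbr n z₀ c i ((y : Fin n → ℂ) i ^ 2))) y = false := by
        filter_upwards [hr.eventually_ne hrx] with y hy
        apply decide_eq_false
        intro h2
        exact hy (by linear_combination h2)
      exact (continuousWithinAt_const (b := false)).congr_of_eventuallyEq hev
        (decide_eq_false hxne)
  continuousOn_invFun := by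
    rw [Topology.IsEmbedding.continuousOn_iff Topology.IsEmbedding.subtypeVal]
    apply continuousOn_pi.mpr
    intro i
    apply ContinuousOn.mul
    · apply Continuous.continuousOn
      have : Continuous (fun p : ConfB n × (Fin n → Bool) => p.2 i) :=
        (continuous_apply i).comp continuous_snd
      exact (continuous_of_discreteTopology (α := Bool) (f := sgnC)).comp this
    · intro p hp
      apply ContinuousAt.continuousWithinAt
      have hinner : ContinuousAt (fun p : ConfB n × (Fin n → Bool) => (p.1 : Fin n → ℂ) i) p :=
        (((continuous_apply i).comp continuous_subtype_val).comp continuous_fst).continuousAt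
      exact ContinuousAt.comp (g := gbr n z₀ c i)
        (f := fun p : ConfB n × (Fin n → Bool) => (p.1 : Fin n → ℂ) i)
        (gbr_continuousAt n z₀ c i ((p.1 : Fin n → ℂ) i) (hp.1 i)) hinner
  baseSet := trivBase n z₀
  open_baseSet := isOpen_trivBase n z₀
  source_eq := rfl
  target_eq := rfl
  proj_toFun x _ := rfl

end Triv2

/-! ### Main theorem -/

/-- For `n ≥ 2`, coordinatewise squaring is a covering map of degree `2^n` from the `B_n`
hyperplane complement `V_0` onto `Conf_n(ℂ∖{0})`; its deck transformations are exactly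
the `2^n` sign-change maps; and it is equivariant for the `S_n`-actions. -/
theorem statement10 (n : ℕ) (hn : 2 ≤ n) :
    IsCoveringMap (sqRestrict n) ∧
    (∀ z : ConfB n, Nat.card { x : V0B n // sqRestrict n x = z } = 2 ^ n) ∧
    (∀ d : V0B n ≃ₜ V0B n,
      (∀ x, sqRestrict n (d x) = sqRestrict n x) ↔
        ∃ ε : Fin n → ℂ, (∀ i, ε i = 1 ∨ ε i = -1) ∧
          ∀ x : V0B n, ((d x : Fin n → ℂ)) = fun i => ε i * (x : Fin n → ℂ) i) ∧
    (∀ π : Equiv.Perm (Fin n), ∀ x : V0B n,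
      ∀ hx : (fun i => (x : Fin n → ℂ) (π i)) ∈ V0B n,
        ((sqRestrict n ⟨fun i => (x : Fin n → ℂ) (π i), hx⟩ : Fin n → ℂ)) =
          fun i => (sqRestrict n x : Fin n → ℂ) (π i)) := by
  have exists_sqrt : ∀ z : ConfB n, ∃ c : Fin n → ℂ, ∀ i, c i ^ 2 = (z : Fin n → ℂ) i := by
    intro z
    have : ∀ i, ∃ w : ℂ, w ^ 2 = (z : Fin n → ℂ) i := fun i =>
      IsAlgClosed.exists_pow_nat_eq _ (by norm_num)
    choose c hc using this
    exact ⟨c, hc⟩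
  refine ⟨?_, ?_, ?_, ?_⟩
  · -- covering map
    apply IsFiberBundle.isCoveringMap (F := Fin n → Bool)
    intro z
    obtain ⟨c, hc⟩ := exists_sqrt z
    exact ⟨trivAt n z c hc, z₀_mem_trivBase n z⟩
  · -- fiber count
    intro z
    obtain ⟨c, hc⟩ := exists_sqrt z
    rw [← Nat.card_congr (fiberEquiv n z c hc)]
    simp [Nat.card_eq_fintype_card]
  · -- deck transformations
    intro d
    constructor
    · intro hd
      obtain ⟨x0v, hx0v⟩ := V0B_nonempty n
      haveI : PreconnectedSpace (V0B n) :=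
        Subtype.preconnectedSpace (isPathConnected_V0B n).isConnected.isPreconnected
      set x₀ : V0B n := ⟨x0v, hx0v⟩ with hx₀
      set F : Fin n → V0B n → ℂ :=
        fun i x => (d x : Fin n → ℂ) i / (x : Fin n → ℂ) i with hF
      have hFcont : ∀ i, Continuous (F i) := by
        intro i
        apply Continuous.div
        · exact (continuous_apply i).comp (continuous_subtype_val.comp d.continuous)
        · exact (continuous_apply i).comp continuous_subtype_val
        · exact fun x => x.2.1 i
      have hFval : ∀ i (x : V0B n), F i x = 1 ∨ F i x = -1 := by
        intro i x
        have hsq : (d x : Fin n → ℂ) i ^ 2 = (x : Fin n → ℂ) i ^ 2 := by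
          have := congrArg (fun w : ConfB n => (w : Fin n → ℂ) i) (hd x)
          simpa [sqRestrict_val] using this
        have hx0 : (x : Fin n → ℂ) i ≠ 0 := x.2.1 i
        rcases (sq_eq_sq_iff_eq_or_eq_neg (R := ℂ)).mp hsq with h | h
        · left; rw [hF]; simp only; rw [h, div_self hx0]
        · right; rw [hF]; simp only; rw [h, neg_div, div_self hx0]
      have hFconst : ∀ i (x : V0B n), F i x = F i x₀ := by
        intro i
        set s : Set (V0B n) := F i ⁻¹' {F i x₀} with hs
        have hclosed : IsClosed s := (isClosed_singleton).preimage (hFcont i)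
        have hcompl : sᶜ = F i ⁻¹' {-F i x₀} := by
          ext x
          simp only [hs, Set.mem_compl_iff, Set.mem_preimage, Set.mem_singleton_iff]
          rcases hFval i x with h | h <;> rcases hFval i x₀ with h0 | h0 <;>
            rw [h, h0] <;> norm_num
        have hopen : IsOpen s := by
          rw [← isClosed_compl_iff, hcompl]
          exact (isClosed_singleton).preimage (hFcont i)
        have hx₀mem : x₀ ∈ s := rfl
        rcases isClopen_iff.mp ⟨hclosed, hopen⟩ with hemp | huniv
        · rw [hemp] at hx₀mem
          exact absurd hx₀mem (Set.notMem_empty x₀)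
        · intro x
          have : x ∈ s := by rw [huniv]; trivial
          exact this
      refine ⟨fun i => F i x₀, fun i => hFval i x₀, fun x => ?_⟩
      funext i
      have h1 : F i x = F i x₀ := hFconst i x
      have hx0 : (x : Fin n → ℂ) i ≠ 0 := x.2.1 i
      have : F i x * (x : Fin n → ℂ) i = (d x : Fin n → ℂ) i := by
        rw [hF]; simp only; rw [div_mul_cancel₀ _ hx0]
      rw [← this, h1]
    · rintro ⟨ε, hε, hεx⟩ x
      apply Subtype.ext
      rw [sqRestrict_val, sqRestrict_val, hεx x]
      funext i
      have h2 : ε i ^ 2 = 1 := by rcases hε i with h | h <;> rw [h] <;> ring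
      show (ε i * (x : Fin n → ℂ) i) ^ 2 = (x : Fin n → ℂ) i ^ 2
      rw [mul_pow, h2, one_mul]
  · -- equivariance
    intro π x hx
    rfl
end

section
/- Let n ≥ 2. In the Artin group A(B_n), the element (a_1 a_2 ⋯ a_n)^n is central. -/
/-- The four-braid relation word `(i j)² ((j i)²)⁻¹` in the free group. -/
def fourRel {α : Type} (i j : α) : FreeGroup α :=
  (FreeGroup.of i * FreeGroup.of j) ^ 2 * ((FreeGroup.of j * FreeGroup.of i) ^ 2)⁻¹

/-- Defining relations of the Artin group of type `B_n` (generators `a_1, …, a_n`,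
0-based): `a_1 a_2 a_1 a_2 = a_2 a_1 a_2 a_1`, braid relations between consecutive
generators `a_i, a_{i+1}` for `i ≥ 2`, and commutation for `|i−j| ≥ 2`. -/
def BnRels (n : ℕ) : Set (FreeGroup (Fin n)) :=
  { r | ∃ i j : Fin n, i < j ∧
      ((i.val = 0 ∧ j.val = 1 ∧ r = fourRel i j) ∨
       (1 ≤ i.val ∧ j.val = i.val + 1 ∧ r = braidRel i j) ∨
       (i.val + 2 ≤ j.val ∧ r = commRel i j)) }

/-- The Artin group `A(B_n)`. -/
abbrev ArtinB (n : ℕ) : Type := PresentedGroup (BnRels n)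

namespace ArtinBAux

/-- ℕ-indexed generators, extended by `1` out of range. -/
noncomputable def aa (n : ℕ) (t : ℕ) : ArtinB n :=
  if h : t < n then PresentedGroup.of ⟨t, h⟩ else 1

/-- Product of generators `aa i, aa (i+1), …, aa (j-1)`. -/
noncomputable def TT (n i j : ℕ) : ArtinB n :=
  ((List.range' i (j - i)).map (aa n)).prod

lemma rel_one {n : ℕ} {r : FreeGroup (Fin n)} (h : r ∈ BnRels n) :
    PresentedGroup.mk (BnRels n) r = 1 := by
  apply (QuotientGroup.eq_one_iff r).2
  exact Subgroup.subset_normalClosure h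

variable {n : ℕ}

lemma aa_eq (t : ℕ) (h : t < n) : aa n t = PresentedGroup.of ⟨t, h⟩ := dif_pos h

lemma comm_rel {s t : ℕ} (h : s + 2 ≤ t) : Commute (aa n s) (aa n t) := by
  by_cases ht : t < n
  · have hs : s < n := by omega
    have hmem : commRel (⟨s, hs⟩ : Fin n) ⟨t, ht⟩ ∈ BnRels n := by
      exact ⟨⟨s, hs⟩, ⟨t, ht⟩, by simp [Fin.lt_def]; omega, Or.inr (Or.inr ⟨h, rfl⟩)⟩
    have := rel_one hmem
    rw [commRel] at this
    simp only [map_mul, map_inv] at this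
    have h2 : (PresentedGroup.of ⟨s, hs⟩ : ArtinB n) * PresentedGroup.of ⟨t, ht⟩ =
        PresentedGroup.of ⟨t, ht⟩ * PresentedGroup.of ⟨s, hs⟩ := by
      have := mul_inv_eq_one.mp this
      exact this
    rw [aa_eq s hs, aa_eq t ht]
    exact h2
  · rw [show aa n t = 1 from dif_neg ht]
    exact Commute.one_right _

lemma braid_rel {s : ℕ} (h1 : 1 ≤ s) (h2 : s + 1 < n) :
    aa n s * aa n (s + 1) * aa n s = aa n (s + 1) * aa n s * aa n (s + 1) := by
  have hs : s < n := by omega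
  have hmem : braidRel (⟨s, hs⟩ : Fin n) ⟨s + 1, h2⟩ ∈ BnRels n :=
    ⟨⟨s, hs⟩, ⟨s + 1, h2⟩, by simp [Fin.lt_def], Or.inr (Or.inl ⟨h1, rfl, rfl⟩)⟩
  have := rel_one hmem
  rw [braidRel] at this
  simp only [map_mul, map_inv] at this
  rw [aa_eq s hs, aa_eq (s + 1) h2]
  exact mul_inv_eq_one.mp this

lemma four_rel (hn : 2 ≤ n) :
    aa n 0 * aa n 1 * aa n 0 * aa n 1 = aa n 1 * aa n 0 * aa n 1 * aa n 0 := by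
  have h0 : 0 < n := by omega
  have h1 : 1 < n := by omega
  have hmem : fourRel (⟨0, h0⟩ : Fin n) ⟨1, h1⟩ ∈ BnRels n :=
    ⟨⟨0, h0⟩, ⟨1, h1⟩, by simp [Fin.lt_def], Or.inl ⟨rfl, rfl, rfl⟩⟩
  have := rel_one hmem
  rw [fourRel] at this
  simp only [map_mul, map_inv, map_pow] at this
  have := mul_inv_eq_one.mp this
  rw [aa_eq 0 h0, aa_eq 1 h1]
  rw [sq, sq] at this
  simp only [mul_assoc] at this ⊢
  exact this

lemma TT_split {i j k : ℕ} (hij : i ≤ j) (hjk : j ≤ k) :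
    TT n i k = TT n i j * TT n j k := by
  unfold TT
  rw [← List.prod_append, ← List.map_append]
  congr 1
  rw [show k - i = (j - i) + (k - j) by omega, ← List.range'_append_1,
    show i + (j - i) = j by omega]

lemma TT_single (i : ℕ) : TT n i (i + 1) = aa n i := by
  unfold TT
  simp

lemma TT_refl (i : ℕ) : TT n i i = 1 := by
  unfold TT
  simp

lemma comm_TT_right {s i j : ℕ} (h : s + 2 ≤ i) : Commute (aa n s) (TT n i j) := by
  apply Commute.list_prod_right
  intro x hx
  simp only [List.mem_map] at hx
  obtain ⟨t, ht, rfl⟩ := hx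
  have := List.mem_range'_1.mp ht
  exact comm_rel (by omega)

lemma comm_TT_left {s i j : ℕ} (h : j + 1 ≤ s) : Commute (aa n s) (TT n i j) := by
  apply Commute.list_prod_right
  intro x hx
  simp only [List.mem_map] at hx
  obtain ⟨t, ht, rfl⟩ := hx
  have := List.mem_range'_1.mp ht
  exact (comm_rel (by omega)).symm


section Main

variable {n : ℕ}

lemma TT_cons {i j : ℕ} (h : i < j) : TT n i j = aa n i * TT n (i + 1) j := by
  rw [TT_split (show i ≤ i + 1 by omega) (show i + 1 ≤ j by omega), TT_single]

lemma TT_snoc {i j : ℕ} (h : i < j) : TT n i j = TT n i (j - 1) * aa n (j - 1) := by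
  rw [TT_split (show i ≤ j - 1 by omega) (show j - 1 ≤ j by omega)]
  have e := TT_single (n := n) (j - 1)
  rw [show j - 1 + 1 = j by omega] at e
  rw [e]

lemma shift {i : ℕ} (h1 : 1 ≤ i) (h2 : i + 1 < n) :
    TT n 0 n * aa n i = aa n (i + 1) * TT n 0 n := by
  have c1 : Commute (aa n i) (TT n (i + 2) n) := comm_TT_right (le_refl _)
  have c2 : Commute (aa n (i + 1)) (TT n 0 i) := comm_TT_left (by omega)
  have hb := braid_rel (n := n) h1 h2
  have d1 : TT n 0 n = TT n 0 i * aa n i * aa n (i + 1) * TT n (i + 2) n := by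
    rw [TT_split (Nat.zero_le i) (show i ≤ n by omega), TT_cons (show i < n by omega),
        TT_cons (show i + 1 < n by omega)]
    group
  rw [d1]
  calc TT n 0 i * aa n i * aa n (i + 1) * TT n (i + 2) n * aa n i
      = TT n 0 i * (aa n i * aa n (i + 1)) * (aa n i * TT n (i + 2) n) := by
        rw [mul_assoc _ (TT n (i + 2) n) (aa n i), ← c1.eq]; group
    _ = TT n 0 i * (aa n i * aa n (i + 1) * aa n i) * TT n (i + 2) n := by group
    _ = TT n 0 i * (aa n (i + 1) * aa n i * aa n (i + 1)) * TT n (i + 2) n := by rw [hb]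
    _ = (aa n (i + 1) * TT n 0 i) * (aa n i * aa n (i + 1) * TT n (i + 2) n) := by
        rw [c2.eq]; group
    _ = aa n (i + 1) * (TT n 0 i * aa n i * aa n (i + 1) * TT n (i + 2) n) := by group

lemma keyfour (hn : 2 ≤ n) :
    aa n 1 * TT n 0 n * aa n 0 = aa n 0 * aa n 1 * TT n 0 n := by
  have c0 : Commute (aa n 0) (TT n 2 n) := comm_TT_right (le_refl _)
  have hf := four_rel (n := n) hn
  have d1 : TT n 0 n = aa n 0 * aa n 1 * TT n 2 n := by
    rw [TT_cons (show 0 < n by omega), TT_cons (show 1 < n by omega)]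
    group
  rw [d1]
  calc aa n 1 * (aa n 0 * aa n 1 * TT n 2 n) * aa n 0
      = aa n 1 * aa n 0 * aa n 1 * (TT n 2 n * aa n 0) := by group
    _ = aa n 1 * aa n 0 * aa n 1 * (aa n 0 * TT n 2 n) := by rw [← c0.eq]
    _ = aa n 1 * aa n 0 * aa n 1 * aa n 0 * TT n 2 n := by group
    _ = aa n 0 * aa n 1 * aa n 0 * aa n 1 * TT n 2 n := by rw [← hf]
    _ = aa n 0 * aa n 1 * (aa n 0 * aa n 1 * TT n 2 n) := by group

lemma push (hn : 2 ≤ n) : ∀ k, 1 ≤ k → k ≤ n - 1 →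
    TT n 0 n * TT n 1 k = TT n 2 (k + 1) * TT n 0 n := by
  intro k
  induction k with
  | zero => omega
  | succ m ih =>
    intro _ hk
    rcases Nat.eq_zero_or_pos m with hm | hm
    · subst hm
      rw [TT_refl, TT_refl, mul_one, one_mul]
    · have hstep := shift (n := n) hm (by omega)
      have e1 : TT n 1 (m + 1) = TT n 1 m * aa n m := by
        rw [TT_split (show 1 ≤ m by omega) (show m ≤ m + 1 by omega), TT_single]
      have e2 : TT n 2 (m + 2) = TT n 2 (m + 1) * aa n (m + 1) := by
        rw [TT_split (show 2 ≤ m + 1 by omega) (show m + 1 ≤ m + 2 by omega), TT_single]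
      rw [e1, e2, ← mul_assoc, ih hm (by omega)]
      rw [mul_assoc, hstep, ← mul_assoc]

lemma sq_key (hn : 2 ≤ n) :
    TT n 0 n * TT n 0 n * aa n (n - 1) = aa n 1 * (TT n 0 n * TT n 0 n) := by
  have d1 : TT n 0 n = aa n 0 * TT n 1 n := TT_cons (show 0 < n by omega)
  have d2 : TT n 1 n = TT n 1 (n - 1) * aa n (n - 1) := TT_snoc (by omega)
  have d3 : aa n 1 * TT n 2 n = TT n 1 n := (TT_cons (show 1 < n by omega)).symm
  have hp : TT n 0 n * TT n 1 (n - 1) = TT n 2 n * TT n 0 n := by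
    rcases Nat.eq_or_lt_of_le hn with h2 | h3
    · rw [← h2]; simp [TT_refl]
    · have := push (n := n) hn (n - 1) (by omega) (le_refl _)
      rw [show n - 1 + 1 = n by omega] at this
      exact this
  have hk := keyfour (n := n) hn
  symm
  calc aa n 1 * (TT n 0 n * TT n 0 n)
      = aa n 1 * TT n 0 n * aa n 0 * TT n 1 n := by nth_rewrite 2 [d1]; group
    _ = aa n 0 * aa n 1 * TT n 0 n * TT n 1 n := by rw [hk]
    _ = aa n 0 * aa n 1 * (TT n 0 n * TT n 1 (n - 1)) * aa n (n - 1) := by rw [d2]; group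
    _ = aa n 0 * aa n 1 * (TT n 2 n * TT n 0 n) * aa n (n - 1) := by rw [hp]
    _ = aa n 0 * (aa n 1 * TT n 2 n) * TT n 0 n * aa n (n - 1) := by group
    _ = aa n 0 * TT n 1 n * TT n 0 n * aa n (n - 1) := by rw [d3]
    _ = TT n 0 n * TT n 0 n * aa n (n - 1) := by rw [← d1]

lemma pow_shift (hn : 2 ≤ n) : ∀ k, k ≤ n - 2 →
    TT n 0 n ^ k * aa n 1 = aa n (k + 1) * TT n 0 n ^ k := by
  intro k
  induction k with
  | zero => simp
  | succ m ih =>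
    intro hm
    have hs := shift (n := n) (show 1 ≤ m + 1 by omega) (show m + 1 + 1 < n by omega)
    rw [pow_succ', mul_assoc, ih (by omega), ← mul_assoc, hs, mul_assoc]

lemma comm_pow_one (hn : 2 ≤ n) :
    TT n 0 n ^ n * aa n 1 = aa n 1 * TT n 0 n ^ n := by
  have e : TT n 0 n ^ n = TT n 0 n * TT n 0 n * TT n 0 n ^ (n - 2) := by
    rw [← sq, ← pow_add, show 2 + (n - 2) = n by omega]
  have hps := pow_shift (n := n) hn (n - 2) (le_refl _)
  rw [show n - 2 + 1 = n - 1 by omega] at hps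
  rw [e, mul_assoc, hps, ← mul_assoc, sq_key hn, mul_assoc]

lemma comm_pow (hn : 2 ≤ n) : ∀ i, 1 ≤ i → i < n →
    TT n 0 n ^ n * aa n i = aa n i * TT n 0 n ^ n := by
  intro i
  induction i with
  | zero => omega
  | succ m ih =>
    intro _ hm
    rcases Nat.eq_zero_or_pos m with h0 | h0
    · subst h0; exact comm_pow_one hn
    · have hs := shift (n := n) h0 hm
      have key : TT n 0 n ^ n * aa n (m + 1) * TT n 0 n
          = aa n (m + 1) * TT n 0 n ^ n * TT n 0 n := by
        calc TT n 0 n ^ n * aa n (m + 1) * TT n 0 n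
            = TT n 0 n ^ n * (aa n (m + 1) * TT n 0 n) := by group
          _ = TT n 0 n ^ n * (TT n 0 n * aa n m) := by rw [← hs]
          _ = TT n 0 n * (TT n 0 n ^ n * aa n m) := by
              rw [← mul_assoc, ← mul_assoc, (Commute.pow_self (TT n 0 n) n).eq]
          _ = TT n 0 n * (aa n m * TT n 0 n ^ n) := by rw [ih h0 (by omega)]
          _ = (TT n 0 n * aa n m) * TT n 0 n ^ n := by group
          _ = aa n (m + 1) * TT n 0 n * TT n 0 n ^ n := by rw [hs]
          _ = aa n (m + 1) * TT n 0 n ^ n * TT n 0 n := by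
              rw [mul_assoc, mul_assoc, (Commute.pow_self (TT n 0 n) n).eq]
      exact mul_right_cancel key

lemma comm_pow_zero (hn : 2 ≤ n) :
    TT n 0 n ^ n * aa n 0 = aa n 0 * TT n 0 n ^ n := by
  have d1 : TT n 0 n = aa n 0 * TT n 1 n := TT_cons (show 0 < n by omega)
  have cT : Commute (TT n 0 n ^ n) (TT n 1 n) := by
    apply Commute.list_prod_right
    intro x hx
    simp only [List.mem_map] at hx
    obtain ⟨t, ht, rfl⟩ := hx
    have htm := List.mem_range'_1.mp ht
    exact comm_pow hn t (by omega) (by omega)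
  have key : TT n 0 n ^ n * aa n 0 * TT n 1 n = aa n 0 * TT n 0 n ^ n * TT n 1 n := by
    calc TT n 0 n ^ n * aa n 0 * TT n 1 n
        = TT n 0 n ^ n * TT n 0 n := by rw [mul_assoc, ← d1]
      _ = TT n 0 n * TT n 0 n ^ n := (Commute.pow_self (TT n 0 n) n).eq
      _ = aa n 0 * (TT n 1 n * TT n 0 n ^ n) := by rw [d1]; group
      _ = aa n 0 * (TT n 0 n ^ n * TT n 1 n) := by rw [← cT.eq]
      _ = aa n 0 * TT n 0 n ^ n * TT n 1 n := by group
  exact mul_right_cancel key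

lemma comm_pow_of (hn : 2 ≤ n) (x : Fin n) :
    Commute ((PresentedGroup.of x : ArtinB n)) (TT n 0 n ^ n) := by
  have : (PresentedGroup.of x : ArtinB n) = aa n x.val := by
    rw [aa_eq x.val x.isLt]
  rw [this]
  rcases Nat.eq_zero_or_pos x.val with h0 | h0
  · rw [h0]; exact (comm_pow_zero hn).symm
  · exact (comm_pow hn x.val h0 x.isLt).symm

lemma delta_eq : (List.ofFn (fun i : Fin n => (PresentedGroup.of i : ArtinB n))).prod
    = TT n 0 n := by
  unfold TT
  rw [List.ofFn_eq_map, Nat.sub_zero, ← List.range_eq_range', ← (show (List.finRange n).map (fun i : Fin n => i.val) = List.range n from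
      List.ext_getElem (by simp) (by simp)),
    List.map_map]
  congr 1
  refine List.map_congr_left fun x _ => ?_
  show _ = aa n x.val
  rw [aa_eq x.val x.isLt]

end Main

end ArtinBAux

/-- For `n ≥ 2`, the element `(a_1 a_2 ⋯ a_n)^n` is central in the Artin group `A(B_n)`. -/
theorem statement11 (n : ℕ) (hn : 2 ≤ n) :
    ((List.ofFn (fun i : Fin n => (PresentedGroup.of i : ArtinB n))).prod) ^ n ∈
      Subgroup.center (ArtinB n) := by
  rw [ArtinBAux.delta_eq, Subgroup.mem_center_iff]
  intro g
  change Commute g _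
  induction g using QuotientGroup.induction_on with
  | H z =>
    have hz : ∀ w : FreeGroup (Fin n),
        Commute (PresentedGroup.mk (BnRels n) w) (ArtinBAux.TT n 0 n ^ n) := by
      intro w
      induction w using FreeGroup.induction_on with
      | C1 => rw [map_one]; exact Commute.one_left _
      | of x => exact ArtinBAux.comm_pow_of hn x
      | inv_of x h => exact (by simpa using h.inv_left)
      | mul x y hx hy => simpa [map_mul] using hx.mul_left hy
    exact hz z
end

section
/- Let n ≥ 1. The map p : Conf_n(ℂ∖{0}) → ℂ∖{0} defined by p(y_1,…,y_n) = y_1 y_2 ⋯ y_n is a locally trivial fibration: for every w ∈ ℂ∖{0} there exist an open neighborhood U of w and a homeomorphism h : p^{-1}(U) → U × p^{-1}({w}) such that the composition of h with projection to U equals p on p^{-1}(U). -/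
/-- The once-punctured plane `ℂ ∖ {0}`. -/
abbrev Cstar : Type := { z : ℂ // z ≠ 0 }

/-- The ordered configuration space `Conf_n(ℂ∖{0})`. -/
abbrev ConfCstar (n : ℕ) : Type :=
  { y : Fin n → ℂ // (∀ i, y i ≠ 0) ∧ ∀ i j : Fin n, i ≠ j → y i ≠ y j }

/-- The product map `p(y_1,…,y_n) = y_1 y_2 ⋯ y_n : Conf_n(ℂ∖{0}) → ℂ∖{0}`. -/
def prodMap (n : ℕ) : ConfCstar n → Cstar :=
  fun y => ⟨∏ i, (y : Fin n → ℂ) i,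
    Finset.prod_ne_zero_iff.mpr fun i _ => y.2.1 i⟩

namespace St13

variable (n : ℕ) (w : Cstar)

/-- A branch of the `n`-th root of `u/w`, defined via the principal logarithm. -/
noncomputable def c (u : Cstar) : ℂ := Complex.exp (Complex.log (u.1 / w.1) / n)

lemma c_ne_zero (u : Cstar) : c n w u ≠ 0 := Complex.exp_ne_zero _

/-- The trivializing neighborhood of `w`. -/
def U : Set Cstar := {u | u.1 / w.1 ∈ Complex.slitPlane}

lemma isOpen_U : IsOpen (U w) :=
  Complex.isOpen_slitPlane.preimage (continuous_subtype_val.div_const _)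

lemma w_mem_U : w ∈ U w := by
  show w.1 / w.1 ∈ Complex.slitPlane
  rw [div_self w.2]
  exact Complex.one_mem_slitPlane

lemma c_pow (hn : n ≠ 0) {u : Cstar} (hu : u ∈ U w) : c n w u ^ n = u.1 / w.1 := by
  have hz : u.1 / w.1 ≠ 0 := div_ne_zero u.2 w.2
  rw [c, ← Complex.exp_nat_mul, mul_comm, div_mul_cancel₀ _ (Nat.cast_ne_zero.mpr hn),
    Complex.exp_log hz]

lemma cont_prodMap : Continuous (prodMap n) :=
  Continuous.subtype_mk
    (continuous_finset_prod _ fun i _ => (continuous_apply i).comp continuous_subtype_val) _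

lemma contOn_c : ContinuousOn (c n w) (U w) := by
  apply Complex.continuous_exp.comp_continuousOn
  apply ContinuousOn.div_const
  exact (continuousOn_of_forall_continuousAt fun z hz => continuousAt_clog hz).comp
    ((continuous_subtype_val.div_const _).continuousOn) (fun u hu => hu)

/-- The forward map of the trivialization. -/
noncomputable def fwd (hn : n ≠ 0) :
    (prodMap n ⁻¹' U w) → (U w × (prodMap n ⁻¹' {w})) := fun y =>
  (⟨prodMap n y.1, y.2⟩,
   ⟨⟨fun i => y.1.1 i / c n w (prodMap n y.1),
     ⟨fun i => div_ne_zero (y.1.2.1 i) (c_ne_zero n w _),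
      fun i j hij h => y.1.2.2 i j hij (by
        have h2 := congrArg (· * c n w (prodMap n y.1)) h
        simpa [div_mul_cancel₀ _ (c_ne_zero n w (prodMap n y.1))] using h2)⟩⟩, by
    have hu : prodMap n y.1 ∈ U w := y.2
    have h0 : (prodMap n y.1).1 ≠ 0 := (prodMap n y.1).2
    show prodMap n _ ∈ ({w} : Set Cstar)
    rw [Set.mem_singleton_iff]
    apply Subtype.ext
    show (∏ i, y.1.1 i / c n w (prodMap n y.1)) = w.1
    rw [Finset.prod_div_distrib, Finset.prod_const, Finset.card_univ, Fintype.card_fin,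
      c_pow n w hn hu]
    show (prodMap n y.1).1 / ((prodMap n y.1).1 / w.1) = w.1
    field_simp⟩)

lemma prod_inv (hn : n ≠ 0) (uz : U w × (prodMap n ⁻¹' {w})) :
    (∏ i, c n w uz.1.1 * uz.2.1.1 i) = uz.1.1.1 := by
  have hz : (∏ i, uz.2.1.1 i) = w.1 := congrArg Subtype.val uz.2.2
  rw [Finset.prod_mul_distrib, Finset.prod_const, Finset.card_univ, Fintype.card_fin,
    c_pow n w hn uz.1.2, hz, div_mul_cancel₀ _ w.2]

/-- The inverse map of the trivialization. -/
noncomputable def inv (hn : n ≠ 0) :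
    (U w × (prodMap n ⁻¹' {w})) → (prodMap n ⁻¹' U w) := fun uz =>
  ⟨⟨fun i => c n w uz.1.1 * uz.2.1.1 i,
    ⟨fun i => mul_ne_zero (c_ne_zero n w _) (uz.2.1.2.1 i),
     fun i j hij h => uz.2.1.2.2 i j hij
       (mul_left_cancel₀ (c_ne_zero n w _) h)⟩⟩, by
    show (∏ i, c n w uz.1.1 * uz.2.1.1 i) / w.1 ∈ Complex.slitPlane
    rw [prod_inv n w hn uz]
    exact uz.1.2⟩

lemma prodMap_inv (hn : n ≠ 0) (uz : U w × (prodMap n ⁻¹' {w})) :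
    prodMap n (inv n w hn uz).1 = uz.1.1 :=
  Subtype.ext (prod_inv n w hn uz)

lemma cont_fwd (hn : n ≠ 0) : Continuous (fwd n w hn) := by
  apply Continuous.prodMk
  · exact Continuous.subtype_mk ((cont_prodMap n).comp continuous_subtype_val) _
  · apply Continuous.subtype_mk
    apply Continuous.subtype_mk
    apply continuous_pi
    intro i
    apply Continuous.div
    · exact (continuous_apply i).comp (continuous_subtype_val.comp continuous_subtype_val)
    · exact (contOn_c n w).comp_continuous
        ((cont_prodMap n).comp continuous_subtype_val) (fun y => y.2)
    · intro y; exact c_ne_zero n w _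

lemma cont_inv (hn : n ≠ 0) : Continuous (inv n w hn) := by
  apply Continuous.subtype_mk
  apply Continuous.subtype_mk
  apply continuous_pi
  intro i
  apply Continuous.mul
  · exact (contOn_c n w).comp_continuous
      (continuous_subtype_val.comp continuous_fst) (fun uz => uz.1.2)
  · exact (continuous_apply i).comp
      (continuous_subtype_val.comp (continuous_subtype_val.comp continuous_snd))

lemma left_inv (hn : n ≠ 0) : Function.LeftInverse (inv n w hn) (fwd n w hn) := by
  intro y
  apply Subtype.ext
  apply Subtype.ext
  funext i
  show c n w (prodMap n y.1) * (y.1.1 i / c n w (prodMap n y.1)) = y.1.1 i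
  rw [mul_comm, div_mul_cancel₀ _ (c_ne_zero n w _)]

lemma right_inv (hn : n ≠ 0) : Function.RightInverse (inv n w hn) (fwd n w hn) := by
  intro uz
  have hp := prodMap_inv n w hn uz
  apply Prod.ext
  · exact Subtype.ext hp
  · apply Subtype.ext
    apply Subtype.ext
    funext i
    show (c n w uz.1.1 * uz.2.1.1 i) / c n w (prodMap n (inv n w hn uz).1) = uz.2.1.1 i
    rw [hp, mul_div_cancel_left₀ _ (c_ne_zero n w _)]

end St13

/-- For `n ≥ 1`, the product map `p : Conf_n(ℂ∖{0}) → ℂ∖{0}` is a locally trivial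
fibration: every `w` has an open neighborhood `U` with a homeomorphism
`p⁻¹(U) ≃ U × p⁻¹({w})` over `U`. -/
theorem statement13 (n : ℕ) (hn : 1 ≤ n) (w : Cstar) :
    ∃ U : Set Cstar, IsOpen U ∧ w ∈ U ∧
      ∃ h : (prodMap n ⁻¹' U) ≃ₜ (U × (prodMap n ⁻¹' {w})),
        ∀ y : (prodMap n ⁻¹' U), ((h y).1 : Cstar) = prodMap n (y : ConfCstar n) := by
  have hn0 : n ≠ 0 := by omega
  refine ⟨St13.U w, St13.isOpen_U w, St13.w_mem_U w,
    ⟨⟨⟨St13.fwd n w hn0, St13.inv n w hn0, St13.left_inv n w hn0, St13.right_inv n w hn0⟩,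
      St13.cont_fwd n w hn0, St13.cont_inv n w hn0⟩, fun y => rfl⟩⟩
end

section
/- Let n ≥ 3. There exists a surjective group homomorphism from the Artin group A(Ã_{n−1}) onto the Artin group A(D_n). -/
/-- Cyclic adjacency (for `i < j`, 0-based) of the `n` nodes of the affine Coxeter
diagram `Ã_{n−1}`. -/
def AffAJoined (n : ℕ) (i j : Fin n) : Prop :=
  j.val = i.val + 1 ∨ (i.val = 0 ∧ j.val = n - 1)

/-- Defining relations of the Artin group of type `Ã_{n−1}` (generators `a_1, …, a_n`,
indices cyclic mod `n`): cyclically adjacent generators braid, the others commute. -/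
def AffARels (n : ℕ) : Set (FreeGroup (Fin n)) :=
  { r | ∃ i j : Fin n, i < j ∧
      ((AffAJoined n i j ∧ r = braidRel i j) ∨ (¬ AffAJoined n i j ∧ r = commRel i j)) }

/-- The Artin group `A(Ã_{n−1})`. -/
abbrev ArtinAffA (n : ℕ) : Type := PresentedGroup (AffARels n)

section GrpLemmas
variable {G : Type*} [Group G] (a b c d u A D E : G)

lemma braid_conj (h : a*b*a = b*a*b) :
    (u*a*u⁻¹)*(u*b*u⁻¹)*(u*a*u⁻¹) = (u*b*u⁻¹)*(u*a*u⁻¹)*(u*b*u⁻¹) := by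
  calc (u*a*u⁻¹)*(u*b*u⁻¹)*(u*a*u⁻¹) = u*(a*b*a)*u⁻¹ := by group
  _ = u*(b*a*b)*u⁻¹ := by rw [h]
  _ = (u*b*u⁻¹)*(u*a*u⁻¹)*(u*b*u⁻¹) := by group

lemma comm_conj (hbd : b*d = d*b) (had : a*d = d*a) :
    (a*b*a⁻¹)*d = d*(a*b*a⁻¹) := by
  have h1 : a⁻¹*d = d*a⁻¹ := (Commute.inv_left had).eq
  calc (a*b*a⁻¹)*d = a*b*(a⁻¹*d) := by group
  _ = a*(b*d)*a⁻¹ := by rw [h1]; group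
  _ = a*(d*b)*a⁻¹ := by rw [hbd]
  _ = (a*d)*b*a⁻¹ := by group
  _ = (d*a)*b*a⁻¹ := by rw [had]
  _ = d*(a*b*a⁻¹) := by group

lemma conj1 (hac : a*c*a = c*a*c) (hbc : b*c*b = c*b*c) (hab : a*b = b*a) :
    (c*b*c⁻¹)*a*(c*b*c⁻¹) = a*(c*b*c⁻¹)*a := by
  have e2 : b⁻¹*a = a*b⁻¹ := ((Commute.symm hab).inv_left).eq
  have h1 : c*b*c⁻¹ = b⁻¹*c*b := by
    calc c*b*c⁻¹ = b⁻¹*(b*c*b)*c⁻¹ := by group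
    _ = b⁻¹*(c*b*c)*c⁻¹ := by rw [hbc]
    _ = b⁻¹*c*b := by group
  rw [h1]
  calc (b⁻¹*c*b)*a*(b⁻¹*c*b) = b⁻¹*c*(b*a*b⁻¹)*c*b := by group
  _ = b⁻¹*c*((a*b)*b⁻¹)*c*b := by rw [← hab]
  _ = b⁻¹*((c*a*c))*b := by group
  _ = b⁻¹*(a*c*a)*b := by rw [← hac]
  _ = (b⁻¹*a)*c*(a*b) := by group
  _ = (b⁻¹*a)*c*(b*a) := by rw [hab]
  _ = (a*b⁻¹)*c*(b*a) := by rw [e2]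
  _ = a*(b⁻¹*c*b)*a := by group

lemma conj2 (hac : a*c*a = c*a*c) (hba : b*a*b = a*b*a) (hbc : b*c = c*b) :
    (a*b*a⁻¹)*c*(a*b*a⁻¹) = c*(a*b*a⁻¹)*c := by
  have e1 : a⁻¹*c*a = c*a*c⁻¹ := by
    calc a⁻¹*c*a = a⁻¹*(c*a*c)*c⁻¹ := by group
    _ = a⁻¹*(a*c*a)*c⁻¹ := by rw [hac]
    _ = c*a*c⁻¹ := by group
  have e4 : c⁻¹*b = b*c⁻¹ := ((Commute.inv_right hbc).eq).symm
  have hL : (a*b*a⁻¹)*c*(a*b*a⁻¹) = c*a*c*b*a*c⁻¹*a⁻¹ := by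
    calc (a*b*a⁻¹)*c*(a*b*a⁻¹) = a*b*(a⁻¹*c*a)*(b*a⁻¹) := by group
    _ = a*b*(c*a*c⁻¹)*(b*a⁻¹) := by rw [e1]
    _ = a*(b*c)*a*(c⁻¹*b)*a⁻¹ := by group
    _ = a*(c*b)*a*(b*c⁻¹)*a⁻¹ := by rw [hbc, e4]
    _ = (a*c)*(b*a*b)*(c⁻¹*a⁻¹) := by group
    _ = (a*c)*(a*b*a)*(c⁻¹*a⁻¹) := by rw [hba]
    _ = (a*c*a)*b*a*c⁻¹*a⁻¹ := by group
    _ = (c*a*c)*b*a*c⁻¹*a⁻¹ := by rw [hac]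
    _ = c*a*c*b*a*c⁻¹*a⁻¹ := by group
  have hR : c*(a*b*a⁻¹)*c = c*a*c*b*a*c⁻¹*a⁻¹ := by
    calc c*(a*b*a⁻¹)*c = c*a*b*(a⁻¹*c*a)*a⁻¹ := by group
    _ = c*a*b*(c*a*c⁻¹)*a⁻¹ := by rw [e1]
    _ = c*a*(b*c)*(a*c⁻¹*a⁻¹) := by group
    _ = c*a*(c*b)*(a*c⁻¹*a⁻¹) := by rw [hbc]
    _ = c*a*c*b*a*c⁻¹*a⁻¹ := by group
  rw [hL, hR]

lemma conj3 (hbd : b*d*b = d*b*d) (had : a*d = d*a) :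
    (a*b*a⁻¹)*d*(a*b*a⁻¹) = d*(a*b*a⁻¹)*d := by
  have h1 : a⁻¹*d = d*a⁻¹ := (Commute.inv_left had).eq
  calc (a*b*a⁻¹)*d*(a*b*a⁻¹) = a*b*(a⁻¹*d)*a*b*a⁻¹ := by group
  _ = a*b*(d*a⁻¹)*a*b*a⁻¹ := by rw [h1]
  _ = a*(b*d*b)*a⁻¹ := by group
  _ = a*(d*b*d)*a⁻¹ := by rw [hbd]
  _ = (a*d)*b*(d*a⁻¹) := by group
  _ = (a*d)*b*(a⁻¹*d) := by rw [← h1]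
  _ = (d*a)*b*(a⁻¹*d) := by rw [had]
  _ = d*(a*b*a⁻¹)*d := by group

lemma conj4 (h : b*a*b = a*b*a) :
    (a*b*a⁻¹)*a*(a*b*a⁻¹) = a*(a*b*a⁻¹)*a := by
  calc (a*b*a⁻¹)*a*(a*b*a⁻¹) = a*(b*a*b)*a⁻¹ := by group
  _ = a*(a*b*a)*a⁻¹ := by rw [h]
  _ = a*(a*b*a⁻¹)*a := by group

lemma keyComm (h1 : A*D*A = D*A*D) (h2 : E*A = A*E) :
    (A*(D*E*D⁻¹)*A⁻¹)*D = D*(A*(D*E*D⁻¹)*A⁻¹) := by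
  have e5 : A⁻¹*D*A = D*A*D⁻¹ := by
    calc A⁻¹*D*A = A⁻¹*(D*A*D)*D⁻¹ := by group
    _ = A⁻¹*(A*D*A)*D⁻¹ := by rw [h1]
    _ = D*A*D⁻¹ := by group
  calc (A*(D*E*D⁻¹)*A⁻¹)*D = A*D*E*D⁻¹*(A⁻¹*D*A)*A⁻¹ := by group
  _ = A*D*E*D⁻¹*(D*A*D⁻¹)*A⁻¹ := by rw [e5]
  _ = A*D*(E*A)*(D⁻¹*A⁻¹) := by group
  _ = A*D*(A*E)*(D⁻¹*A⁻¹) := by rw [h2]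
  _ = (A*D*A)*E*(D⁻¹*A⁻¹) := by group
  _ = (D*A*D)*E*(D⁻¹*A⁻¹) := by rw [h1]
  _ = D*(A*(D*E*D⁻¹)*A⁻¹) := by group

end GrpLemmas
namespace S16

lemma rel_eq_one {n : ℕ} {r : FreeGroup (Fin n)} (h : r ∈ DnRels n) :
    PresentedGroup.mk (DnRels n) r = 1 :=
  (QuotientGroup.eq_one_iff r).mpr (Subgroup.subset_normalClosure h)

lemma of_braid {n : ℕ} {i j : Fin n} (hij : i < j) (hJ : DnJoined n i j) :
    (PresentedGroup.of (rels := DnRels n) i) * PresentedGroup.of j * PresentedGroup.of i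
      = PresentedGroup.of j * PresentedGroup.of i * PresentedGroup.of j := by
  have h1 := rel_eq_one (n := n) ⟨i, j, hij, Or.inl ⟨hJ, rfl⟩⟩
  rw [braidRel] at h1
  simp only [map_mul, map_inv] at h1
  rw [mul_inv_eq_one] at h1
  exact h1

lemma of_comm {n : ℕ} {i j : Fin n} (hij : i < j) (hJ : ¬ DnJoined n i j) :
    (PresentedGroup.of (rels := DnRels n) i) * PresentedGroup.of j
      = PresentedGroup.of j * PresentedGroup.of i := by
  have h1 := rel_eq_one (n := n) ⟨i, j, hij, Or.inr ⟨hJ, rfl⟩⟩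
  rw [commRel] at h1
  simp only [map_mul, map_inv] at h1
  rw [mul_inv_eq_one] at h1
  exact h1

def gD (n : ℕ) (i : ℕ) : ArtinD n := if h : i < n then PresentedGroup.of ⟨i, h⟩ else 1

def wD (n : ℕ) : ℕ → ArtinD n
  | 0 => gD n 0
  | k+1 => gD n (k+2) * wD n k * (gD n (k+2))⁻¹

lemma b_atom {n i j : ℕ} (hi : i < n) (hj : j < n) (hij : i < j)
    (hJ : DnJoined n ⟨i, hi⟩ ⟨j, hj⟩) :
    gD n i * gD n j * gD n i = gD n j * gD n i * gD n j := by
  simp only [gD, dif_pos hi, dif_pos hj]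
  exact of_braid (by simpa [Fin.lt_def] using hij) hJ

lemma c_atom {n i j : ℕ} (hi : i < n) (hj : j < n) (hij : i < j)
    (hJ : ¬ DnJoined n ⟨i, hi⟩ ⟨j, hj⟩) :
    gD n i * gD n j = gD n j * gD n i := by
  simp only [gD, dif_pos hi, dif_pos hj]
  exact of_comm (by simpa [Fin.lt_def] using hij) hJ

lemma b02 {n : ℕ} (h : 2 < n) : gD n 0 * gD n 2 * gD n 0 = gD n 2 * gD n 0 * gD n 2 :=
  b_atom (by omega) h (by omega) (Or.inl ⟨rfl, rfl⟩)

lemma b12 {n : ℕ} (h : 2 < n) : gD n 1 * gD n 2 * gD n 1 = gD n 2 * gD n 1 * gD n 2 :=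
  b_atom (by omega) h (by omega) (Or.inr (Or.inl ⟨rfl, rfl⟩))

lemma bSucc {n i : ℕ} (h2 : 2 ≤ i) (hj : i + 1 < n) :
    gD n i * gD n (i+1) * gD n i = gD n (i+1) * gD n i * gD n (i+1) :=
  b_atom (by omega) hj (by omega) (Or.inr (Or.inr ⟨h2, rfl⟩))

lemma c0 {n j : ℕ} (h : j = 1 ∨ 3 ≤ j) (hj : j < n) :
    gD n 0 * gD n j = gD n j * gD n 0 :=
  c_atom (by omega) hj (by omega) (by simp only [DnJoined]; omega)

lemma c1 {n j : ℕ} (h : 3 ≤ j) (hj : j < n) :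
    gD n 1 * gD n j = gD n j * gD n 1 :=
  c_atom (by omega) hj (by omega) (by simp only [DnJoined]; omega)

lemma cFar {n i j : ℕ} (h2 : 2 ≤ i) (hij : i + 2 ≤ j) (hj : j < n) :
    gD n i * gD n j = gD n j * gD n i :=
  c_atom (by omega) hj (by omega) (by simp only [DnJoined]; omega)

end S16

namespace S16

/-- W1: `wD n k` commutes with `gD n j` for `j ≥ k+3`. -/
lemma W1 {n : ℕ} : ∀ k j, k + 3 ≤ j → j < n → wD n k * gD n j = gD n j * wD n k := by
  intro k
  induction k with
  | zero =>
    intro j h3 hj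
    simpa [wD] using c0 (n := n) (Or.inr h3) hj
  | succ k ih =>
    intro j h3 hj
    simp only [wD]
    exact comm_conj _ _ _ (ih j (by omega) hj) (cFar (by omega) (by omega) hj)

/-- W2: `wD n k` braids with `gD n (k+2)`. -/
lemma W2 {n : ℕ} : ∀ k, k + 2 < n →
    wD n k * gD n (k+2) * wD n k = gD n (k+2) * wD n k * gD n (k+2) := by
  intro k
  induction k with
  | zero => intro h; simpa [wD] using b02 h
  | succ k ih =>
    intro h
    simp only [wD]
    exact conj2 _ _ _ (bSucc (by omega) (by omega)) (ih (by omega))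
      (W1 k (k+3) (by omega) (by omega))

/-- W3: `wD n k` braids with `gD n 1` for `k ≥ 1`. -/
lemma W3 {n : ℕ} : ∀ k, 1 ≤ k → k + 1 < n →
    wD n k * gD n 1 * wD n k = gD n 1 * wD n k * gD n 1 := by
  intro k
  induction k with
  | zero => omega
  | succ k ih =>
    intro _ h
    rcases Nat.eq_zero_or_pos k with rfl | hk
    · simp only [wD]
      exact conj1 _ _ _ (b12 (by omega)) (b02 (by omega)) ((c0 (Or.inl rfl) (by omega)).symm)
    · simp only [wD]
      exact conj3 _ _ _ (ih hk (by omega)) ((c1 (by omega) (by omega)).symm)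

/-- W4: `wD n k` braids with `gD n (k+1)` for `k ≥ 1`. -/
lemma W4 {n : ℕ} : ∀ k, 1 ≤ k → k + 1 < n →
    wD n k * gD n (k+1) * wD n k = gD n (k+1) * wD n k * gD n (k+1) := by
  intro k hk h
  obtain ⟨m, rfl⟩ : ∃ m, k = m + 1 := ⟨k - 1, by omega⟩
  simp only [wD]
  exact conj4 _ _ (W2 m (by omega))

/-- W5: `wD n k` commutes with `gD n i` for `2 ≤ i ≤ k`. -/
lemma W5 {n : ℕ} : ∀ k i, 2 ≤ i → i ≤ k → k + 1 < n →
    wD n k * gD n i = gD n i * wD n k := by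
  intro k
  induction k with
  | zero => omega
  | succ k ih =>
    intro i h2 hik h
    rcases Nat.lt_or_ge i (k+1) with hlt | hge
    · simp only [wD]
      exact comm_conj _ _ _ (ih i h2 (by omega) (by omega))
        ((cFar h2 (by omega) (by omega)).symm)
    · have hik' : i = k + 1 := by omega
      subst hik'
      obtain ⟨m, rfl⟩ : ∃ m, k = m + 1 := ⟨k - 1, by omega⟩
      simp only [wD]
      exact keyComm (gD n (m+3)) (gD n (m+2)) (wD n m)
        ((bSucc (i := m+2) (by omega) (by omega)).symm)
        (W1 m (m+3) (by omega) (by omega))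

end S16

/-- For `n ≥ 3` there is a surjective group homomorphism `A(Ã_{n−1}) → A(D_n)`. -/
theorem statement16 (n : ℕ) (hn : 3 ≤ n) :
    ∃ f : ArtinAffA n →* ArtinD n, Function.Surjective f := by
  classical
  set F : Fin n → ArtinD n := fun i => if i.val = 0 then S16.wD n (n-2) else S16.gD n i.val
    with hF
  have hrels : ∀ r ∈ AffARels n, FreeGroup.lift F r = 1 := by
    rintro r ⟨i, j, hij, hcase⟩
    have hij' : i.val < j.val := (Fin.lt_def).mp hij
    have hjn : j.val < n := j.isLt
    rcases hcase with ⟨hJ, rfl⟩ | ⟨hNJ, rfl⟩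
    · have hJ' : j.val = i.val + 1 ∨ (i.val = 0 ∧ j.val = n - 1) := hJ
      rw [braidRel]
      simp only [map_mul, map_inv, FreeGroup.lift_apply_of]
      rw [mul_inv_eq_one]
      by_cases hi0 : i.val = 0
      · have hj0 : ¬ j.val = 0 := by omega
        simp only [hF, if_pos hi0, if_neg hj0]
        rcases hJ' with hj1 | ⟨_, hjn1⟩
        · rw [show j.val = 1 by omega]
          exact S16.W3 (n-2) (by omega) (by omega)
        · rw [hjn1, show n - 1 = (n-2) + 1 by omega]
          exact S16.W4 (n-2) (by omega) (by omega)
      · have hj0 : ¬ j.val = 0 := by omega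
        simp only [hF, if_neg hi0, if_neg hj0]
        have hj1 : j.val = i.val + 1 := by omega
        rw [hj1]
        rcases Nat.lt_or_ge i.val 2 with h1 | h2
        · rw [show i.val = 1 by omega]
          exact S16.b12 (by omega)
        · exact S16.bSucc h2 (by omega)
    · have hNJ' : ¬(j.val = i.val + 1 ∨ (i.val = 0 ∧ j.val = n - 1)) := hNJ
      rw [commRel]
      simp only [map_mul, map_inv, FreeGroup.lift_apply_of]
      rw [mul_inv_eq_one]
      by_cases hi0 : i.val = 0
      · have hj0 : ¬ j.val = 0 := by omega
        simp only [hF, if_pos hi0, if_neg hj0]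
        exact S16.W5 (n-2) j.val (by omega) (by omega) (by omega)
      · have hj0 : ¬ j.val = 0 := by omega
        simp only [hF, if_neg hi0, if_neg hj0]
        rcases Nat.lt_or_ge i.val 2 with h1 | h2
        · rw [show i.val = 1 by omega]
          exact S16.c1 (by omega) hjn
        · exact S16.cFar h2 (by omega) hjn
  refine ⟨PresentedGroup.toGroup hrels, ?_⟩
  set f := PresentedGroup.toGroup hrels with hf
  have hg : ∀ m, 1 ≤ m → ∀ hm : m < n, S16.gD n m ∈ f.range := by
    intro m hm1 hm
    refine MonoidHom.mem_range.mpr ⟨PresentedGroup.of ⟨m, hm⟩, ?_⟩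
    rw [hf, PresentedGroup.toGroup.of]
    simp only [hF]
    rw [if_neg (show ¬ ((⟨m, hm⟩ : Fin n) : ℕ) = 0 by first | omega | (simp; omega))]
  have hw : S16.wD n (n-2) ∈ f.range := by
    refine MonoidHom.mem_range.mpr ⟨PresentedGroup.of ⟨0, by omega⟩, ?_⟩
    rw [hf, PresentedGroup.toGroup.of]
    simp only [hF]
    simp
  have hdown : ∀ k, k + 2 < n → S16.wD n (k+1) ∈ f.range → S16.wD n k ∈ f.range := by
    intro k hk hmem
    have e : S16.wD n k = (S16.gD n (k+2))⁻¹ * S16.wD n (k+1) * S16.gD n (k+2) := by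
      simp only [S16.wD]; group
    rw [e]
    exact Subgroup.mul_mem _
      (Subgroup.mul_mem _ (Subgroup.inv_mem _ (hg (k+2) (by omega) hk)) hmem)
      (hg (k+2) (by omega) hk)
  have hchain : ∀ t, t ≤ n - 2 → S16.wD n (n-2-t) ∈ f.range := by
    intro t
    induction t with
    | zero => intro _; simpa using hw
    | succ t ih =>
      intro ht
      have h1 : n - 2 - t = (n - 2 - (t+1)) + 1 := by omega
      have h2 := ih (by omega)
      rw [h1] at h2
      exact hdown _ (by omega) h2
  have h0 : S16.gD n 0 ∈ f.range := by
    have h3 := hchain (n-2) le_rfl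
    rw [show n - 2 - (n-2) = 0 from by omega] at h3
    simpa [S16.wD] using h3
  have hall : ∀ i : Fin n, PresentedGroup.of i ∈ f.range := by
    intro i
    by_cases hi : i.val = 0
    · have e : S16.gD n 0 = PresentedGroup.of i := by
        simp only [S16.gD, dif_pos (show 0 < n by omega)]
        congr 1
        exact Fin.ext hi.symm
      rwa [e] at h0
    · have h4 := hg i.val (by omega) i.isLt
      have e : S16.gD n i.val = PresentedGroup.of i := by
        simp only [S16.gD, dif_pos i.isLt]
      rwa [e] at h4
  intro x
  obtain ⟨y, hy⟩ := MonoidHom.mem_range.mp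
    (PresentedGroup.generated_by (DnRels n) f.range hall x)
  exact ⟨y, hy⟩
end

section
/- Let n ≥ 3. The group homomorphism ι : A(A_{n−1}) → A(Ã_{n−1}) determined by ι(s_i) = a_i for i = 1,…,n−1 is well defined, injective, and split: there exists a group homomorphism r : A(Ã_{n−1}) → A(A_{n−1}) with r ∘ ι equal to the identity of A(A_{n−1}). -/
/-- Defining relations of the Artin group of type `A_m` with `m` generators
`s_1, …, s_m` (the classical braid group presentation): braid relations between
consecutive generators, commutation for `|i−j| ≥ 2`. -/
def ARels (m : ℕ) : Set (FreeGroup (Fin m)) :=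
  { r | ∃ i j : Fin m, i < j ∧
      ((j.val = i.val + 1 ∧ r = braidRel i j) ∨
       (i.val + 2 ≤ j.val ∧ r = commRel i j)) }

/-- The Artin group `A(A_m)` on `m` generators (the `(m+1)`-strand braid group). -/
abbrev ArtinA (m : ℕ) : Type := PresentedGroup (ARels m)

/-! ### Generic group-theoretic lemmas -/

section Generic
variable {G : Type*} [Group G]

theorem conj_braid_left {a b : G} (h : a * b * a = b * a * b) :
    a⁻¹ * b * a = b * a * b⁻¹ := by
  have h1 : a⁻¹ * b * a = a⁻¹ * (b * a * b) * b⁻¹ := by group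
  rw [h1, ← h]; group

theorem conj_braid_right {a b : G} (h : a * b * a = b * a * b) :
    a * b * a⁻¹ = b⁻¹ * a * b := by
  have h1 : a * b * a⁻¹ = b⁻¹ * (b * a * b) * a⁻¹ := by group
  rw [h1, ← h]; group

theorem vlem {a b : G} (h : a * b * a = b * a * b) :
    (a⁻¹ * b * a) * b * (a⁻¹ * b * a) = b * (a⁻¹ * b * a) * b := by
  have h1 := conj_braid_left h
  calc (a⁻¹ * b * a) * b * (a⁻¹ * b * a)
      = (b * a * b⁻¹) * b * (a⁻¹ * b * a) := by rw [h1]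
    _ = b * b * a := by group
    _ = b * (b * a * b⁻¹) * b := by group
    _ = b * (a⁻¹ * b * a) * b := by rw [h1]

theorem vlem' {a b : G} (h : a * b * a = b * a * b) :
    (a * b * a⁻¹) * b * (a * b * a⁻¹) = b * (a * b * a⁻¹) * b := by
  have h2 := conj_braid_right h
  calc (a * b * a⁻¹) * b * (a * b * a⁻¹)
      = (a * b * a⁻¹) * b * (b⁻¹ * a * b) := by rw [h2]
    _ = a * b * b := by group
    _ = b * (b⁻¹ * a * b) * b := by group
    _ = b * (a * b * a⁻¹) * b := by rw [h2]

/-- `Cw s t k = s (t+k) * s (t+k-1) * ⋯ * s (t+1)` (empty product for `k = 0`). -/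
def Cw (s : ℕ → G) (t : ℕ) : ℕ → G
  | 0 => 1
  | k + 1 => s (t + k + 1) * Cw s t k

theorem Cw_succ (s : ℕ → G) (t k : ℕ) : Cw s t (k + 1) = s (t + k + 1) * Cw s t k := rfl

theorem Cw_succ' (s : ℕ → G) (t k : ℕ) : Cw s t (k + 1) = Cw s (t + 1) k * s (t + 1) := by
  induction k generalizing t with
  | zero => simp [Cw]
  | succ k ih =>
    rw [Cw_succ, ih t, show Cw s (t+1) (k+1) = s ((t+1)+k+1) * Cw s (t+1) k from rfl,
      show t + (k+1) + 1 = (t+1) + k + 1 by omega, mul_assoc]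

theorem Cw_comm (s : ℕ → G) (j t k : ℕ)
    (h : ∀ i, t + 1 ≤ i → i ≤ t + k → s j * s i = s i * s j) :
    s j * Cw s t k = Cw s t k * s j := by
  induction k with
  | zero => simp [Cw]
  | succ k ih =>
    have h1 := h (t + k + 1) (by omega) (by omega)
    rw [Cw_succ, ← mul_assoc, h1, mul_assoc, ih (fun i hi1 hi2 => h i hi1 (by omega)),
      ← mul_assoc]

variable (s : ℕ → G) (m : ℕ)
variable (hb : ∀ i, i + 2 ≤ m → s i * s (i+1) * s i = s (i+1) * s i * s (i+1))
variable (hc : ∀ i j, i + 2 ≤ j → j + 1 ≤ m → s i * s j = s j * s i)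

include hb hc in
theorem L1 (k j : ℕ) (h1 : 1 ≤ j) (h2 : j + 1 ≤ k) (hk : k + 1 ≤ m) :
    s j * Cw s 0 k = Cw s 0 k * s (j + 1) := by
  induction k with
  | zero => omega
  | succ k ih =>
    rcases Nat.lt_or_ge (j + 1) (k + 1) with hlt | hge
    · have hcj : s j * s (0 + k + 1) = s (0 + k + 1) * s j := by
        have := hc j (k + 1) (by omega) (by omega)
        simpa [Nat.zero_add] using this
      rw [Cw_succ, ← mul_assoc, hcj, mul_assoc, ih (by omega) (by omega), ← mul_assoc]
    · have hj : j = k := by omega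
      subst hj
      obtain ⟨k', rfl⟩ : ∃ k', j = k' + 1 := ⟨j - 1, by omega⟩
      have e1 : Cw s 0 (k' + 2) = s (k' + 2) * (s (k' + 1) * Cw s 0 k') := by
        rw [Cw_succ, Cw_succ]; norm_num
      rw [e1]
      have hbr := hb (k' + 1) (by omega)
      have hcomm : s (k' + 2) * Cw s 0 k' = Cw s 0 k' * s (k' + 2) := by
        apply Cw_comm
        intro i hi1 hi2
        exact (hc i (k' + 2) (by omega) (by omega)).symm
      calc s (k'+1) * (s (k'+2) * (s (k'+1) * Cw s 0 k'))
          = (s (k'+1) * s (k'+2) * s (k'+1)) * Cw s 0 k' := by group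
        _ = (s (k'+2) * s (k'+1) * s (k'+2)) * Cw s 0 k' := by rw [hbr]
        _ = s (k'+2) * s (k'+1) * (s (k'+2) * Cw s 0 k') := by group
        _ = s (k'+2) * s (k'+1) * (Cw s 0 k' * s (k'+2)) := by rw [hcomm]
        _ = s (k'+2) * (s (k'+1) * Cw s 0 k') * s (k'+1+1) := by group

include hb hc in
theorem L2 (k : ℕ) (h1 : 1 ≤ k) : ∀ t, t + k + 1 ≤ m →
    Cw s t k * s t * (Cw s t k)⁻¹ =
      (Cw s t (k-1) * s t)⁻¹ * s (t + k) * (Cw s t (k-1) * s t) := by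
  induction k with
  | zero => omega
  | succ k ih =>
    intro t ht
    rcases Nat.eq_zero_or_pos k with hk0 | hkpos
    · subst hk0
      simp only [Cw, Nat.add_zero, Nat.zero_add, mul_one, one_mul, Nat.sub_self]
      have hbr := hb t (by omega)
      have := conj_braid_right hbr.symm
      simpa [mul_assoc] using this
    · have e1 : Cw s t (k + 1) = Cw s (t+1) k * s (t+1) := Cw_succ' s t k
      have hbr := hb t (by omega)
      have hcr : s (t+1) * s t * (s (t+1))⁻¹ = (s t)⁻¹ * s (t+1) * s t :=
        conj_braid_right hbr.symm
      have hcm : Commute (s t) (Cw s (t+1) k) := by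
        apply Cw_comm
        intro i hi1 hi2
        exact hc t i (by omega) (by omega)
      have ihh := ih hkpos (t + 1) (by omega)
      have e2 : Cw s (t+1) (k-1) * s (t+1) = Cw s t k := by
        obtain ⟨k', rfl⟩ : ∃ k', k = k' + 1 := ⟨k - 1, by omega⟩
        simpa using (Cw_succ' s t k').symm
      rw [e2] at ihh
      have hcm1 : Cw s (t+1) k * (s t)⁻¹ = (s t)⁻¹ * Cw s (t+1) k := (hcm.inv_left).symm
      have hcm2 : s t * (Cw s (t+1) k)⁻¹ = (Cw s (t+1) k)⁻¹ * s t := hcm.inv_right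
      calc Cw s t (k+1) * s t * (Cw s t (k+1))⁻¹
          = Cw s (t+1) k * (s (t+1) * s t * (s (t+1))⁻¹) * (Cw s (t+1) k)⁻¹ := by
            rw [e1]; group
        _ = (Cw s (t+1) k * (s t)⁻¹) * s (t+1) * (s t * (Cw s (t+1) k)⁻¹) := by
            rw [hcr]; group
        _ = ((s t)⁻¹ * Cw s (t+1) k) * s (t+1) * ((Cw s (t+1) k)⁻¹ * s t) := by
            rw [hcm1, hcm2]
        _ = (s t)⁻¹ * (Cw s (t+1) k * s (t+1) * (Cw s (t+1) k)⁻¹) * s t := by group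
        _ = (s t)⁻¹ * ((Cw s t k)⁻¹ * s (t+1+k) * Cw s t k) * s t := by rw [ihh]
        _ = (Cw s t ((k+1)-1) * s t)⁻¹ * s (t + (k+1)) * (Cw s t ((k+1)-1) * s t) := by
            rw [show t+1+k = t+(k+1) by omega, Nat.add_sub_cancel]; group
end Generic

section XPart
variable {G : Type*} [Group G]
variable (s : ℕ → G) (m : ℕ)

/-- The band element `x = s_{m-1} ⋯ s_1 · s_0 · (s_{m-1} ⋯ s_1)⁻¹`. -/
def xw : G := Cw s 0 (m-1) * s 0 * (Cw s 0 (m-1))⁻¹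

variable (hb : ∀ i, i + 2 ≤ m → s i * s (i+1) * s i = s (i+1) * s i * s (i+1))
variable (hc : ∀ i j, i + 2 ≤ j → j + 1 ≤ m → s i * s j = s j * s i)

include hb hc in
theorem braid0 (hm : 2 ≤ m) : xw s m * s 0 * xw s m = s 0 * xw s m * s 0 := by
  have e1 : Cw s 0 (m-1) = Cw s 1 (m-2) * s 1 := by
    have := Cw_succ' s 0 (m-2)
    rwa [show (m-2)+1 = m-1 by omega, Nat.zero_add] at this
  set c := Cw s 1 (m-2) with hcdef
  have hcm : Commute (s 0) c := by
    apply Cw_comm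
    intro i hi1 hi2
    exact hc 0 i (by omega) (by omega)
  set u := s 1 * s 0 * (s 1)⁻¹ with hudef
  have ex : xw s m = c * u * c⁻¹ := by
    rw [xw, e1, hudef]; group
  have hu : u * s 0 * u = s 0 * u * s 0 := by
    have := vlem' (a := s 1) (b := s 0) (hb 0 (by omega)).symm
    rwa [← hudef] at this
  have hcm' : Commute (s 0) c⁻¹ := hcm.inv_right
  calc xw s m * s 0 * xw s m
      = c * u * (c⁻¹ * s 0) * (c * u * c⁻¹) := by rw [ex]; group
    _ = c * u * (s 0 * c⁻¹) * (c * u * c⁻¹) := by rw [hcm'.eq]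
    _ = c * (u * s 0 * u) * c⁻¹ := by group
    _ = c * (s 0 * u * s 0) * c⁻¹ := by rw [hu]
    _ = (c * s 0) * u * (s 0 * c⁻¹) := by group
    _ = (s 0 * c) * u * (c⁻¹ * s 0) := by rw [hcm.eq, hcm'.eq]
    _ = s 0 * xw s m * s 0 := by rw [ex]; group

include hb hc in
theorem braidTop (hm : 2 ≤ m) :
    xw s m * s (m-1) * xw s m = s (m-1) * xw s m * s (m-1) := by
  have hL2 := L2 s m hb hc (m-1) (by omega) 0 (by omega)
  rw [Nat.zero_add, show (m-1)-1 = m-2 by omega] at hL2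
  have ex : xw s m = (Cw s 0 (m-2) * s 0)⁻¹ * s (m-1) * (Cw s 0 (m-2) * s 0) := by
    rw [xw]; exact hL2
  obtain ⟨d, hd, hcm⟩ : ∃ d : G, Cw s 0 (m-2) * s 0 = s (m-2) * d ∧
      Commute (s (m-1)) d := by
    rcases eq_or_lt_of_le hm with hm2 | hm3
    · refine ⟨1, ?_, Commute.one_right _⟩
      rw [← hm2]; simp [Cw]
    · refine ⟨Cw s 0 (m-3) * s 0, ?_, ?_⟩
      · have h0 := Cw_succ s 0 (m-3)
        rw [show (m-3)+1 = m-2 by omega, Nat.zero_add, show m-3+1 = m-2 by omega] at h0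
        rw [h0]; group
      · have h1 : Commute (s (m-1)) (Cw s 0 (m-3)) := by
          apply Cw_comm
          intro i hi1 hi2
          exact (hc i (m-1) (by omega) (by omega)).symm
        have h2 : Commute (s (m-1)) (s 0) :=
          (hc 0 (m-1) (by omega) (by omega)).symm
        exact h1.mul_right h2
  set v := (s (m-2))⁻¹ * s (m-1) * s (m-2) with hvdef
  have ex2 : xw s m = d⁻¹ * v * d := by
    rw [ex, hd, hvdef]; group
  have hv : v * s (m-1) * v = s (m-1) * v * s (m-1) := by
    have hbr := hb (m-2) (by omega)
    rw [show m-2+1 = m-1 by omega] at hbr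
    have := vlem (a := s (m-2)) (b := s (m-1)) hbr
    rwa [← hvdef] at this
  have hcm' : Commute (s (m-1)) d⁻¹ := hcm.inv_right
  calc xw s m * s (m-1) * xw s m
      = d⁻¹ * v * (d * s (m-1) * d⁻¹) * v * d := by rw [ex2]; group
    _ = d⁻¹ * v * (d * (d⁻¹ * s (m-1))) * v * d := by rw [← hcm'.eq]; group
    _ = d⁻¹ * (v * s (m-1) * v) * d := by group
    _ = d⁻¹ * (s (m-1) * v * s (m-1)) * d := by rw [hv]
    _ = (d⁻¹ * s (m-1)) * v * (s (m-1) * d) := by group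
    _ = (s (m-1) * d⁻¹) * v * (d * s (m-1)) := by rw [hcm'.eq, hcm.eq]
    _ = s (m-1) * xw s m * s (m-1) := by rw [ex2]; group

include hb hc in
theorem commx (j : ℕ) (h1 : 1 ≤ j) (h2 : j + 2 ≤ m) :
    xw s m * s j = s j * xw s m := by
  have hL := L1 s m hb hc (m-1) j h1 (by omega) (by omega)
  have hL' : (Cw s 0 (m-1))⁻¹ * s j = s (j+1) * (Cw s 0 (m-1))⁻¹ := by
    rw [inv_mul_eq_iff_eq_mul, ← mul_assoc, ← hL]; group
  have hc0 : s 0 * s (j+1) = s (j+1) * s 0 := hc 0 (j+1) (by omega) (by omega)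
  calc xw s m * s j
      = Cw s 0 (m-1) * s 0 * ((Cw s 0 (m-1))⁻¹ * s j) := by rw [xw]; group
    _ = Cw s 0 (m-1) * (s 0 * s (j+1)) * (Cw s 0 (m-1))⁻¹ := by rw [hL']; group
    _ = Cw s 0 (m-1) * (s (j+1) * s 0) * (Cw s 0 (m-1))⁻¹ := by rw [hc0]
    _ = (Cw s 0 (m-1) * s (j+1)) * s 0 * (Cw s 0 (m-1))⁻¹ := by group
    _ = (s j * Cw s 0 (m-1)) * s 0 * (Cw s 0 (m-1))⁻¹ := by rw [← hL]
    _ = s j * xw s m := by rw [xw]; group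
end XPart

/-! ### Presented group helpers -/

theorem mk_rel_eq_one {α : Type} {rels : Set (FreeGroup α)} {r : FreeGroup α} (h : r ∈ rels) :
    PresentedGroup.mk rels r = 1 := by
  show (QuotientGroup.mk r : FreeGroup α ⧸ Subgroup.normalClosure rels) = 1
  rw [QuotientGroup.eq_one_iff]
  exact Subgroup.subset_normalClosure h

theorem of_braid {α : Type} {rels : Set (FreeGroup α)} {i j : α} (h : braidRel i j ∈ rels) :
    (PresentedGroup.of i : PresentedGroup rels) * PresentedGroup.of j * PresentedGroup.of i
      = PresentedGroup.of j * PresentedGroup.of i * PresentedGroup.of j := by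
  have h1 := mk_rel_eq_one h
  rw [braidRel, map_mul, map_mul, map_inv, map_mul, map_mul, mul_inv_eq_one] at h1
  exact h1

theorem of_comm {α : Type} {rels : Set (FreeGroup α)} {i j : α} (h : commRel i j ∈ rels) :
    (PresentedGroup.of i : PresentedGroup rels) * PresentedGroup.of j
      = PresentedGroup.of j * PresentedGroup.of i := by
  have h1 := mk_rel_eq_one h
  rw [commRel, map_mul, map_inv, map_mul, mul_inv_eq_one] at h1
  exact h1

theorem lift_braid_eq_one {α : Type} {G : Type*} [Group G] {f : α → G} {i j : α}
    (h : f i * f j * f i = f j * f i * f j) : FreeGroup.lift f (braidRel i j) = 1 := by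
  rw [braidRel, map_mul, map_mul, map_inv, map_mul, map_mul, mul_inv_eq_one]
  simpa [FreeGroup.lift_apply_of] using h

theorem lift_comm_eq_one {α : Type} {G : Type*} [Group G] {f : α → G} {i j : α}
    (h : f i * f j = f j * f i) : FreeGroup.lift f (commRel i j) = 1 := by
  rw [commRel, map_mul, map_inv, map_mul, mul_inv_eq_one]
  simpa [FreeGroup.lift_apply_of] using h

/-! ### The specific generators -/

/-- The generators of `ArtinA (n-1)` as a `ℕ`-indexed family (junk value `1` out of range). -/
def sF (n : ℕ) : ℕ → ArtinA (n-1) := fun i =>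
  if h : i < n-1 then PresentedGroup.of ⟨i, h⟩ else 1

theorem sF_lt (n i : ℕ) (h : i < n-1) : sF n i = PresentedGroup.of ⟨i, h⟩ := dif_pos h

theorem hbA (n : ℕ) : ∀ i, i + 2 ≤ n-1 →
    sF n i * sF n (i+1) * sF n i = sF n (i+1) * sF n i * sF n (i+1) := by
  intro i hi
  rw [sF_lt n i (by omega), sF_lt n (i+1) (by omega)]
  exact of_braid ⟨⟨i, by omega⟩, ⟨i+1, by omega⟩, by simp [Fin.lt_def],
    Or.inl ⟨rfl, rfl⟩⟩

theorem hcA (n : ℕ) : ∀ i j, i + 2 ≤ j → j + 1 ≤ n-1 →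
    sF n i * sF n j = sF n j * sF n i := by
  intro i j hij hj
  rw [sF_lt n i (by omega), sF_lt n j (by omega)]
  exact of_comm ⟨⟨i, by omega⟩, ⟨j, by omega⟩, by simp [Fin.lt_def]; omega,
    Or.inr ⟨by simpa using hij, rfl⟩⟩

/-- The image of the extra affine generator. -/
def xF (n : ℕ) : ArtinA (n-1) := xw (sF n) (n-1)

/-- The retraction on generators. -/
def FF (n : ℕ) : Fin n → ArtinA (n-1) := fun k =>
  if (k : ℕ) < n-1 then sF n (k : ℕ) else xF n

theorem FF_lt (n : ℕ) (k : Fin n) (h : (k : ℕ) < n-1) : FF n k = sF n (k : ℕ) := if_pos h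

theorem FF_top (n : ℕ) (k : Fin n) (h : ¬ (k : ℕ) < n-1) : FF n k = xF n := if_neg h

/-- For `n ≥ 3`, the homomorphism `ι : A(A_{n−1}) → A(Ã_{n−1})` with `ι(s_i) = a_i`
for `i = 1, …, n−1` is well defined, injective, and split: some homomorphism
`r : A(Ã_{n−1}) → A(A_{n−1})` satisfies `r ∘ ι = id`. -/
theorem statement17 (n : ℕ) (hn : 3 ≤ n) :
    ∃ ι : ArtinA (n - 1) →* ArtinAffA n,
      (∀ i : Fin (n - 1),
        ι (PresentedGroup.of i) = PresentedGroup.of (Fin.castLE (Nat.sub_le n 1) i)) ∧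
      Function.Injective ι ∧
      ∃ r : ArtinAffA n →* ArtinA (n - 1), r.comp ι = MonoidHom.id (ArtinA (n - 1)) := by
  classical
  have hm2 : 2 ≤ n - 1 := by omega
  -- well-definedness of ι
  have hι : ∀ r ∈ ARels (n-1), FreeGroup.lift
      (fun i : Fin (n-1) => (PresentedGroup.of (Fin.castLE (Nat.sub_le n 1) i) :
        ArtinAffA n)) r = 1 := by
    rintro r ⟨i, j, hij, (⟨hji, rfl⟩ | ⟨hle, rfl⟩)⟩
    · exact lift_braid_eq_one (of_braid ⟨Fin.castLE (Nat.sub_le n 1) i,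
        Fin.castLE (Nat.sub_le n 1) j,
        by rw [Fin.lt_def] at hij ⊢; exact hij, Or.inl ⟨Or.inl hji, rfl⟩⟩)
    · refine lift_comm_eq_one (of_comm ⟨Fin.castLE (Nat.sub_le n 1) i,
        Fin.castLE (Nat.sub_le n 1) j,
        by rw [Fin.lt_def] at hij ⊢; exact hij, Or.inr ⟨?_, rfl⟩⟩)
      rintro (h | ⟨h0, h1⟩)
      · simp only [Fin.coe_castLE] at h; omega
      · have hjlt := j.isLt
        simp only [Fin.coe_castLE] at h1; omega
  set ι : ArtinA (n-1) →* ArtinAffA n := PresentedGroup.toGroup hι with hιdef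
  -- well-definedness of the retraction
  have hF : ∀ r ∈ AffARels n, FreeGroup.lift (FF n) r = 1 := by
    rintro r ⟨i, j, hij, (⟨hjn, rfl⟩ | ⟨hnj, rfl⟩)⟩
    · apply lift_braid_eq_one
      have hijv : (i : ℕ) < (j : ℕ) := hij
      rcases hjn with hj1 | ⟨hi0, hjtop⟩
      · rcases Nat.lt_or_ge (j : ℕ) (n-1) with hjm | hjm
        · rw [FF_lt n i (by omega), FF_lt n j hjm, hj1]
          exact hbA n (i : ℕ) (by omega)
        · have hjv : (j : ℕ) = n - 1 := by have := j.isLt; omega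
          have hfi : FF n i = sF n (i : ℕ) := FF_lt n i (by omega)
          rw [hfi, FF_top n j (by omega),
            show (i : ℕ) = (n-1) - 1 by omega]
          exact (braidTop (sF n) (n-1) (hbA n) (hcA n) hm2).symm
      · rw [FF_lt n i (by omega), FF_top n j (by omega), hi0]
        exact (braid0 (sF n) (n-1) (hbA n) (hcA n) hm2).symm
    · apply lift_comm_eq_one
      have hijv : (i : ℕ) < (j : ℕ) := hij
      have hne : (j : ℕ) ≠ (i : ℕ) + 1 := fun h => hnj (Or.inl h)
      rcases Nat.lt_or_ge (j : ℕ) (n-1) with hjm | hjm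
      · rw [FF_lt n i (by omega), FF_lt n j hjm]
        exact hcA n (i : ℕ) (j : ℕ) (by omega) (by omega)
      · have hjv : (j : ℕ) = n - 1 := by have := j.isLt; omega
        have hi0 : (i : ℕ) ≠ 0 := fun h => hnj (Or.inr ⟨h, hjv⟩)
        rw [FF_lt n i (by omega), FF_top n j (by omega)]
        exact (commx (sF n) (n-1) (hbA n) (hcA n) (i : ℕ) (by omega) (by omega)).symm
  set r : ArtinAffA n →* ArtinA (n-1) := PresentedGroup.toGroup hF with hrdef
  have hcomp : r.comp ι = MonoidHom.id (ArtinA (n-1)) := by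
    ext i
    rw [MonoidHom.comp_apply, MonoidHom.id_apply, hιdef, PresentedGroup.toGroup.of,
      hrdef, PresentedGroup.toGroup.of]
    have : FF n (Fin.castLE (Nat.sub_le n 1) i) = sF n (i : ℕ) :=
      FF_lt n _ (by simp [i.isLt])
    rw [this, sF_lt n (i : ℕ) i.isLt]
  refine ⟨ι, fun i => PresentedGroup.toGroup.of hι, ?_, r, hcomp⟩
  have hli : Function.LeftInverse r ι := fun x => by
    have := DFunLike.congr_fun hcomp x
    simpa using this
  exact hli.injective
end
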